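/- arXiv:1511.02906 — 10 statements merged into one kernel-verified Lean document; each statement's English description precedes it below -/
import Mathlib

section
/- Let R be a commutative ring and I an ideal of R satisfying SR₁(I). Then every matrix A ∈ SL(2,R) with A ≡ 1₂ (mod I) can be written as A = (1₂ + aE₁₂) · diag(ε, ε⁻¹) · (1₂ + bE₂₁) · (1₂ + cE₁₂), where a, b, c ∈ I and ε is a unit of R with ε ≡ 1 (mod I). (Relative Gauss decomposition for SL₂; base case of Theorem 1.) -/
open Matrix

/-- A row `a` is `I`-unimodular if its first entry is congruent to `1` mod `I`,
its remaining entries lie in `I`, and its entries generate `R` as an ideal. -/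
def IsIUnimodular {R : Type*} [CommRing R] (I : Ideal R) {n : ℕ} (a : Fin n → R) : Prop :=
  (∀ i : Fin n, (i : ℕ) = 0 → a i - 1 ∈ I) ∧ (∀ i : Fin n, (i : ℕ) ≠ 0 → a i ∈ I) ∧
    Ideal.span (Set.range a) = ⊤

/-- The relative stable range condition `SRₙ(I)`. -/
def SRCond {R : Type*} [CommRing R] (n : ℕ) (I : Ideal R) : Prop :=
  ∀ a : Fin (n + 1) → R, IsIUnimodular I a →
    ∃ b : Fin n → R, (∀ i, b i ∈ I) ∧
      IsIUnimodular I (fun i : Fin n => a i.castSucc + a (Fin.last n) * b i)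

/-!
Write `A = [[α, β], [γ, δ]]`. Since `det A = 1`, the row `(δ, γ)` is `I`-unimodular, so `SR₁(I)`
gives `t ∈ I` with `u = δ + γ t` a unit, `u ≡ 1 mod I`. Then `B = A (1 + t E₁₂)` has
determinant `1` and unit `(2,2)`-entry `u`, and any such matrix factors explicitly as
`(1 + B₁₂ u⁻¹ E₁₂) · diag(u⁻¹, u) · (1 + u⁻¹ B₂₁ E₂₁)`; multiplying back by `1 - t E₁₂` gives `A`.
-/

section RelativeStableRange

variable {R : Type*} [CommRing R] {I : Ideal R}

theorem isIUnimodular_fin_one_iff {a : Fin 1 → R} :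
    IsIUnimodular I a ↔ a 0 - 1 ∈ I ∧ IsUnit (a 0) := by
  simp [IsIUnimodular, Fin.forall_fin_one, Set.range_unique, Ideal.span_singleton_eq_top]

theorem isIUnimodular_pair_iff {x y : R} :
    IsIUnimodular I ![x, y] ↔ x - 1 ∈ I ∧ y ∈ I ∧ IsCoprime x y := by
  simp only [IsIUnimodular, Fin.forall_fin_two, Matrix.range_cons_cons_empty, Ideal.eq_top_iff_one,
    Ideal.mem_span_pair]
  simp [IsCoprime]

theorem SRCond.exists_unit_add_mul (hSR : SRCond 1 I) {x y : R} (hx : x - 1 ∈ I) (hy : y ∈ I)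
    (hxy : IsCoprime x y) : ∃ t ∈ I, ∃ u : Rˣ, (u : R) = x + y * t ∧ (u : R) - 1 ∈ I := by
  obtain ⟨b, hbI, hb⟩ := hSR ![x, y] (isIUnimodular_pair_iff.2 ⟨hx, hy, hxy⟩)
  obtain ⟨hb1, hunit⟩ := isIUnimodular_fin_one_iff.1 hb
  exact ⟨b 0, hbI 0, hunit.unit, rfl, hb1⟩

theorem Units.inv_sub_one_mem {u : Rˣ} (hu : (u : R) - 1 ∈ I) : ((u⁻¹ : Rˣ) : R) - 1 ∈ I := by
  have : ((u⁻¹ : Rˣ) : R) - 1 = -(((u⁻¹ : Rˣ) : R) * ((u : R) - 1)) := by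
    rw [mul_sub, Units.inv_mul]; ring
  rw [this]
  exact I.neg_mem (I.mul_mem_left _ hu)

end RelativeStableRange

theorem Matrix.eq_transvection_mul_diagonal_mul_transvection {R : Type*} [CommRing R]
    {M : Matrix (Fin 2) (Fin 2) R} (hdet : M.det = 1) (u : Rˣ) (hu : M 1 1 = ((u⁻¹ : Rˣ) : R)) :
    M = transvection 0 1 (M 0 1 * u) * diagonal ![(u : R), ((u⁻¹ : Rˣ) : R)] *
      transvection 1 0 (u * M 1 0) := by
  rw [det_fin_two, hu] at hdet
  have h00 : M 0 0 = u + M 0 1 * (u * M 1 0) := by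
    linear_combination (u : R) * hdet - M 0 0 * u.mul_inv
  ext i j
  fin_cases i <;> fin_cases j <;>
    simp [transvection, mul_apply, Fin.sum_univ_two, single, one_apply, diagonal, hu, h00]

/-- Relative Gauss decomposition for `SL₂` under `sr(I) = 1`. -/
theorem relative_gauss_SL2 {R : Type*} [CommRing R] (I : Ideal R) (hSR : SRCond 1 I)
    (A : Matrix.SpecialLinearGroup (Fin 2) R)
    (hA : ∀ i j, (A : Matrix (Fin 2) (Fin 2) R) i j - (1 : Matrix (Fin 2) (Fin 2) R) i j ∈ I) :
    ∃ (a b c : R) (ε : Rˣ), a ∈ I ∧ b ∈ I ∧ c ∈ I ∧ (ε : R) - 1 ∈ I ∧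
      (A : Matrix (Fin 2) (Fin 2) R) =
        (1 + Matrix.single 0 1 a) *
          Matrix.diagonal ![(ε : R), ((ε⁻¹ : Rˣ) : R)] *
          (1 + Matrix.single 1 0 b) *
          (1 + Matrix.single 0 1 c) := by
  have h01 : A 0 1 ∈ I := by simpa using hA 0 1
  have h10 : A 1 0 ∈ I := by simpa using hA 1 0
  have h11 : A 1 1 - 1 ∈ I := by simpa using hA 1 1
  have hdet := A.det_coe
  rw [det_fin_two] at hdet
  have hcop : IsCoprime (A 1 1) (A 1 0) := ⟨A 0 0, -A 0 1, by linear_combination hdet⟩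
  obtain ⟨t, ht, u, hu, hu1⟩ := hSR.exists_unit_add_mul h11 h10 hcop
  set B := (A : Matrix (Fin 2) (Fin 2) R) * transvection 0 1 t with hB
  have hB11 : B 1 1 = ((u⁻¹⁻¹ : Rˣ) : R) := by
    rw [inv_inv, hu, hB, mul_transvection_apply_same]; ring
  have hBdet : B.det = 1 := by
    rw [hB, det_mul, det_transvection_of_ne 0 1 zero_ne_one, A.det_coe, one_mul]
  have hA_eq : (A : Matrix (Fin 2) (Fin 2) R) = B * transvection 0 1 (-t) := by
    rw [hB, mul_assoc, transvection_mul_transvection_same 0 1 zero_ne_one, add_neg_cancel,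
      transvection_zero, mul_one]
  refine ⟨B 0 1 * ↑u⁻¹, ↑u⁻¹ * B 1 0, -t, u⁻¹, ?_, ?_, I.neg_mem ht,
    Units.inv_sub_one_mem hu1, ?_⟩
  · rw [hB, mul_transvection_apply_same]
    exact I.mul_mem_right _ (I.add_mem h01 (I.mul_mem_right _ ht))
  · rw [hB, mul_transvection_apply_of_ne 0 1 1 0 zero_ne_one]
    exact I.mul_mem_left _ h10
  · rw [hA_eq]
    exact congrArg (· * transvection 0 1 (-t))
      (eq_transvection_mul_diagonal_mul_transvection hBdet u⁻¹ hB11)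
end

section
/- Let R be a commutative ring, I an ideal of R satisfying SR₁(I), and n ≥ 2. Then every element g of the relative elementary subgroup E(n,R,I) of SL(n,R) can be written as g = h · u₁ · v · u₂, where h is a diagonal matrix in SL(n,R) all of whose diagonal entries lie in 1 + I, u₁ and u₂ are upper unitriangular matrices all of whose off-diagonal entries lie in I, and v is a lower unitriangular matrix all of whose off-diagonal entries lie in I. (Theorem 1, case Φ = A_{n−1}.) -/
open Matrix

/-- The elementary transvection `t_{ij}(ξ) = 1 + ξE_{ij}` as an element of `SL(n,R)`. -/
def tSL {R : Type*} [CommRing R] {n : ℕ} (i j : Fin n) (hij : i ≠ j) (ξ : R) :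
    Matrix.SpecialLinearGroup (Fin n) R :=
  ⟨Matrix.transvection i j ξ, Matrix.det_transvection_of_ne i j hij ξ⟩

/-- The elementary subgroup `E(n,R)` of `SL(n,R)`. -/
def elemGroup (n : ℕ) (R : Type*) [CommRing R] :
    Subgroup (Matrix.SpecialLinearGroup (Fin n) R) :=
  Subgroup.closure { g | ∃ i j, ∃ hij : i ≠ j, ∃ ξ : R, g = tSL i j hij ξ }

/-- The relative elementary subgroup `E(n,R,I)`: the normal closure in `E(n,R)` of the
subgroup generated by the elementary transvections of level `I`. -/
def relElemGroup (n : ℕ) {R : Type*} [CommRing R] (I : Ideal R) :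
    Subgroup (Matrix.SpecialLinearGroup (Fin n) R) :=
  Subgroup.closure
    { g | ∃ e ∈ elemGroup n R, ∃ i j, ∃ hij : i ≠ j, ∃ s ∈ I, g = e * tSL i j hij s * e⁻¹ }

/-- `u` is upper unitriangular with all off-diagonal entries in `I`. -/
def IsUpperUniI {R : Type*} [CommRing R] (I : Ideal R) {n : ℕ}
    (u : Matrix (Fin n) (Fin n) R) : Prop :=
  (∀ i, u i i = 1) ∧ (∀ i j : Fin n, j < i → u i j = 0) ∧ (∀ i j : Fin n, i < j → u i j ∈ I)

/-- `v` is lower unitriangular with all off-diagonal entries in `I`. -/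
def IsLowerUniI {R : Type*} [CommRing R] (I : Ideal R) {n : ℕ}
    (v : Matrix (Fin n) (Fin n) R) : Prop :=
  (∀ i, v i i = 1) ∧ (∀ i j : Fin n, i < j → v i j = 0) ∧ (∀ i j : Fin n, j < i → v i j ∈ I)

/-!
Every element of `E(n,R,I)` is congruent to `1` modulo `I`, and the decomposition holds for every
such matrix with unit determinant, by induction on `n`. The last row of `g` is unimodular;
compressing it to the pair `(g_{nn}, Σ_{k<n} g_{nk} s_k)`, where `s` is the last column of `g⁻¹`,
lets `sr(I) = 1` produce an upper unitriangular column operation of level `I` after which the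
corner entry is a unit `ε`. Clearing the last row and column against `ε` leaves the Schur
complement, again `≡ 1 (mod I)` with unit determinant, and the factors of its decomposition extend
by the last row and column.
-/

namespace Matrix

variable {α : Type*} {n : ℕ}

-- The block matrix `!![A, x; yᵀ, a]`: `x` is the last column and `y` the last row.
def blocksLast (A : Matrix (Fin n) (Fin n) α) (x y : Fin n → α) (a : α) :
    Matrix (Fin (n + 1)) (Fin (n + 1)) α :=
  of (Fin.snoc (fun i => Fin.snoc (A i) (x i)) (Fin.snoc y a))

section
variable (A : Matrix (Fin n) (Fin n) α) (x y : Fin n → α) (a : α)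

@[simp] lemma blocksLast_castSucc_castSucc (i j : Fin n) :
    blocksLast A x y a i.castSucc j.castSucc = A i j := by simp [blocksLast]

@[simp] lemma blocksLast_castSucc_last (i : Fin n) :
    blocksLast A x y a i.castSucc (Fin.last n) = x i := by simp [blocksLast]

@[simp] lemma blocksLast_last_castSucc (j : Fin n) :
    blocksLast A x y a (Fin.last n) j.castSucc = y j := by simp [blocksLast]

@[simp] lemma blocksLast_last_last : blocksLast A x y a (Fin.last n) (Fin.last n) = a := by
  simp [blocksLast]

@[simp] lemma submatrix_blocksLast :
    (blocksLast A x y a).submatrix Fin.castSucc Fin.castSucc = A := by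
  ext i j; simp

lemma transpose_blocksLast : (blocksLast A x y a)ᵀ = blocksLast Aᵀ y x a := by
  ext i j
  induction i using Fin.lastCases <;> induction j using Fin.lastCases <;> simp

lemma map_blocksLast {β : Type*} (f : α → β) :
    (blocksLast A x y a).map f = blocksLast (A.map f) (f ∘ x) (f ∘ y) (f a) := by
  ext i j
  induction i using Fin.lastCases <;> induction j using Fin.lastCases <;> simp

end

lemma eq_blocksLast (M : Matrix (Fin (n + 1)) (Fin (n + 1)) α) :
    M = blocksLast (M.submatrix Fin.castSucc Fin.castSucc) (fun i => M i.castSucc (Fin.last n))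
      (fun j => M (Fin.last n) j.castSucc) (M (Fin.last n) (Fin.last n)) := by
  ext i j
  induction i using Fin.lastCases <;> induction j using Fin.lastCases <;> simp

lemma blocksLast_one [Zero α] [One α] : blocksLast (1 : Matrix (Fin n) (Fin n) α) 0 0 1 = 1 := by
  ext i j
  induction i using Fin.lastCases <;> induction j using Fin.lastCases <;>
    simp [one_apply, Fin.castSucc_ne_last, (Fin.castSucc_ne_last _).symm]

lemma blocksLast_mul [CommSemiring α] (A B : Matrix (Fin n) (Fin n) α) (x y x' y' : Fin n → α)
    (a b : α) :
    blocksLast A x y a * blocksLast B x' y' b =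
      blocksLast (A * B + vecMulVec x y') (A *ᵥ x' + b • x) (y ᵥ* B + a • y')
        (y ⬝ᵥ x' + a * b) := by
  ext i j
  induction i using Fin.lastCases <;> induction j using Fin.lastCases <;>
    simp [mul_apply, Fin.sum_univ_castSucc, vecMulVec_apply, mulVec, vecMul, dotProduct,
      mul_comm b]

lemma det_blocksLast_zero_row [CommRing α] (A : Matrix (Fin n) (Fin n) α) (x : Fin n → α)
    (a : α) : (blocksLast A x 0 a).det = A.det * a := by
  rw [det_succ_row _ (Fin.last n), Fin.sum_univ_castSucc]
  simp [Fin.succAbove_last, mul_comm]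

lemma det_blocksLast_zero_col [CommRing α] (A : Matrix (Fin n) (Fin n) α) (y : Fin n → α)
    (a : α) : (blocksLast A 0 y a).det = A.det * a := by
  rw [← det_transpose, transpose_blocksLast, det_blocksLast_zero_row, det_transpose]

variable {R : Type*} [CommRing R]

lemma blocksLast_eq_of_unit (A : Matrix (Fin n) (Fin n) R) (x y : Fin n → R) (ε : Rˣ) :
    blocksLast A x y ε = blocksLast 1 ((↑ε⁻¹ : R) • x) 0 1 *
      blocksLast (A - (↑ε⁻¹ : R) • vecMulVec x y) 0 y ε := by
  rw [blocksLast_mul, eq_comm]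
  congr 1
  · rw [smul_vecMulVec]; simp
  · simp [smul_smul]
  · simp
  · simp

lemma blocksLast_mul_blocksLast_mul_blocksLast (b v u : Matrix (Fin n) (Fin n) R)
    (x y : Fin n → R) (ε : Rˣ) (hu : IsUnit u.det) :
    blocksLast b x 0 ε * blocksLast v 0 ((↑ε⁻¹ : R) • (y ᵥ* u⁻¹)) 1 * blocksLast u 0 0 1 =
      blocksLast (b * v * u + (↑ε⁻¹ : R) • vecMulVec x y) x y ε := by
  have hy : ((↑ε⁻¹ : R) • (y ᵥ* u⁻¹)) ᵥ* u = (↑ε⁻¹ : R) • y := by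
    rw [smul_vecMul, vecMul_vecMul, nonsing_inv_mul u hu, vecMul_one]
  rw [blocksLast_mul, blocksLast_mul]
  congr 1
  · rw [add_mul, vecMulVec_mul, hy, vecMulVec_smul]; simp
  · simp
  · simp [nonsing_inv_mul u hu, smul_smul]
  · simp

end Matrix

section

variable {R : Type*} [CommRing R] {I : Ideal R} {n : ℕ}

lemma isLowerUniI_iff_isUpperUniI_transpose {v : Matrix (Fin n) (Fin n) R} :
    IsLowerUniI I v ↔ IsUpperUniI I vᵀ :=
  ⟨fun ⟨h₁, h₂, h₃⟩ => ⟨h₁, fun i j h => h₂ j i h, fun i j h => h₃ j i h⟩,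
    fun ⟨h₁, h₂, h₃⟩ => ⟨h₁, fun i j h => h₂ j i h, fun i j h => h₃ j i h⟩⟩

namespace IsUpperUniI

variable {u u' : Matrix (Fin n) (Fin n) R}

lemma isUpperTriangular (hu : IsUpperUniI I u) : u.IsUpperTriangular :=
  fun i j h => hu.2.1 i j h

lemma det_eq_one (hu : IsUpperUniI I u) : u.det = 1 := by
  simp [det_of_isUpperTriangular hu.isUpperTriangular, hu.1]

lemma mul (hu : IsUpperUniI I u) (hu' : IsUpperUniI I u') : IsUpperUniI I (u * u') := by
  refine ⟨fun i => ?_, fun i j hij => (hu.isUpperTriangular.mul hu'.isUpperTriangular) hij,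
    fun i j hij => ?_⟩
  · rw [mul_apply, Finset.sum_eq_single i]
    · rw [hu.1, hu'.1, one_mul]
    · intro k _ hk
      rcases lt_or_gt_of_ne hk with hki | hik
      · rw [hu.2.1 i k hki, zero_mul]
      · rw [hu'.2.1 k i hik, mul_zero]
    · simp
  · rw [mul_apply]
    refine I.sum_mem fun k _ => ?_
    rcases lt_trichotomy k i with hki | rfl | hik
    · simp [hu.2.1 i k hki]
    · rw [hu.1, one_mul]; exact hu'.2.2 k j hij
    · exact I.mul_mem_right _ (hu.2.2 i k hik)

end IsUpperUniI

lemma isUpperUniI_one : IsUpperUniI I (1 : Matrix (Fin n) (Fin n) R) :=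
  ⟨fun _ => one_apply_eq _, fun _ _ h => one_apply_ne h.ne',
    fun _ _ h => by rw [one_apply_ne h.ne]; exact I.zero_mem⟩

lemma IsLowerUniI.det_eq_one {v : Matrix (Fin n) (Fin n) R} (hv : IsLowerUniI I v) :
    v.det = 1 := by
  rw [← det_transpose]
  exact (isLowerUniI_iff_isUpperUniI_transpose.mp hv).det_eq_one

lemma isUpperUniI_blocksLast {u : Matrix (Fin n) (Fin n) R} {x : Fin n → R}
    (hu : IsUpperUniI I u) (hx : ∀ i, x i ∈ I) : IsUpperUniI I (blocksLast u x 0 1) := by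
  refine ⟨fun i => ?_, fun i j hij => ?_, fun i j hij => ?_⟩
  · induction i using Fin.lastCases <;> simp [hu.1]
  · induction i using Fin.lastCases <;> induction j using Fin.lastCases <;>
      simp_all [(Fin.castSucc_lt_last _).asymm, hu.2.1]
  · induction i using Fin.lastCases <;> induction j using Fin.lastCases <;>
      simp_all [(Fin.castSucc_lt_last _).asymm, hu.2.2]

lemma isLowerUniI_blocksLast {v : Matrix (Fin n) (Fin n) R} {y : Fin n → R}
    (hv : IsLowerUniI I v) (hy : ∀ i, y i ∈ I) : IsLowerUniI I (blocksLast v 0 y 1) := by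
  rw [isLowerUniI_iff_isUpperUniI_transpose, transpose_blocksLast]
  exact isUpperUniI_blocksLast (isLowerUniI_iff_isUpperUniI_transpose.mp hv) hy

lemma Matrix.IsUpperTriangular.blocksLast {b : Matrix (Fin n) (Fin n) R}
    (hb : b.IsUpperTriangular) (x : Fin n → R) (a : R) :
    (blocksLast b x 0 a).IsUpperTriangular := by
  intro i j hij
  induction i using Fin.lastCases <;> induction j using Fin.lastCases <;>
    simp_all [(Fin.castSucc_lt_last _).asymm]
  exact hb hij

section Congruence

variable {m : Type*} [DecidableEq m] {M : Matrix m m R}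

lemma mem_of_map_mk_eq_one (hM : M.map (Ideal.Quotient.mk I) = 1) {i j : m} (hij : i ≠ j) :
    M i j ∈ I := by
  have h := congr_fun (congr_fun hM i) j
  rwa [map_apply, one_apply_ne hij, Ideal.Quotient.eq_zero_iff_mem] at h

lemma sub_one_mem_of_map_mk_eq_one (hM : M.map (Ideal.Quotient.mk I) = 1) (i : m) :
    M i i - 1 ∈ I := by
  have h := congr_fun (congr_fun hM i) i
  rwa [map_apply, one_apply_eq, ← map_one (Ideal.Quotient.mk I), Ideal.Quotient.eq] at h

lemma map_mk_blocksLast_eq_one {A : Matrix (Fin n) (Fin n) R} {x y : Fin n → R} {a : R}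
    (hA : A.map (Ideal.Quotient.mk I) = 1) (hx : ∀ i, x i ∈ I) (hy : ∀ j, y j ∈ I)
    (ha : a - 1 ∈ I) : (blocksLast A x y a).map (Ideal.Quotient.mk I) = 1 := by
  rw [map_blocksLast, hA, ← blocksLast_one]
  congr 1
  · exact funext fun i => Ideal.Quotient.eq_zero_iff_mem.mpr (hx i)
  · exact funext fun j => Ideal.Quotient.eq_zero_iff_mem.mpr (hy j)
  · rw [← map_one (Ideal.Quotient.mk I)]
    exact Ideal.Quotient.eq.mpr ha

end Congruence

lemma vecMul_mem {m k : Type*} [Fintype m] {y : m → R} (hy : ∀ i, y i ∈ I) (N : Matrix m k R)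
    (j : k) : (y ᵥ* N) j ∈ I :=
  I.sum_mem fun i _ => I.mul_mem_right _ (hy i)

lemma SRCond.exists_isUnit_add_mul (hSR : SRCond 1 I) {c d : R} (hc : c - 1 ∈ I) (hd : d ∈ I)
    (hcd : IsCoprime c d) : ∃ b ∈ I, IsUnit (c + d * b) := by
  have hrow : IsIUnimodular I ![c, d] := by
    refine ⟨fun i hi => ?_, fun i hi => ?_, ?_⟩
    · fin_cases i <;> simp_all
    · fin_cases i <;> simp_all
    · rw [range_cons_cons_empty, Ideal.eq_top_iff_one]
      exact Ideal.mem_span_pair.mpr hcd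
  obtain ⟨b, hb, hrow'⟩ := hSR _ hrow
  refine ⟨b 0, hb 0, ?_⟩
  simpa [Set.range_unique, Ideal.span_singleton_eq_top] using hrow'.2.2

lemma SRCond.exists_isUnit_mul_blocksLast (hSR : SRCond 1 I)
    {g : Matrix (Fin (n + 1)) (Fin (n + 1)) R} (hg : g.map (Ideal.Quotient.mk I) = 1)
    (hdet : IsUnit g.det) :
    ∃ x : Fin n → R, (∀ i, x i ∈ I) ∧
      IsUnit ((g * blocksLast 1 x 0 1) (Fin.last n) (Fin.last n)) := by
  set d := ∑ i : Fin n, g (Fin.last n) i.castSucc * g⁻¹ i.castSucc (Fin.last n)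
  have hgd : g⁻¹ (Fin.last n) (Fin.last n) * g (Fin.last n) (Fin.last n) + 1 * d = 1 := by
    have h := congr_fun (congr_fun (mul_nonsing_inv g hdet) (Fin.last n)) (Fin.last n)
    rw [mul_apply, Fin.sum_univ_castSucc, one_apply_eq] at h
    rw [one_mul, mul_comm, add_comm]
    exact h
  have hd : d ∈ I :=
    I.sum_mem fun i _ => I.mul_mem_right _ (mem_of_map_mk_eq_one hg (Fin.castSucc_lt_last i).ne')
  obtain ⟨b, hb, hunit⟩ :=
    hSR.exists_isUnit_add_mul (sub_one_mem_of_map_mk_eq_one hg _) hd ⟨_, _, hgd⟩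
  refine ⟨fun i => g⁻¹ i.castSucc (Fin.last n) * b, fun _ => I.mul_mem_left _ hb, ?_⟩
  convert hunit using 1
  simp [mul_apply, Fin.sum_univ_castSucc, d, Finset.sum_mul, mul_assoc, add_comm]

-- `b` stands for the product `h * u₁`, which is split only at the very end.
def HasGaussDecomp (I : Ideal R) {N : ℕ} (g : Matrix (Fin N) (Fin N) R) : Prop :=
  ∃ b v u, g = b * v * u ∧ b.IsUpperTriangular ∧ b.map (Ideal.Quotient.mk I) = 1 ∧
    IsLowerUniI I v ∧ IsUpperUniI I u

lemma HasGaussDecomp.mul_isUpperUniI {N : ℕ} {g u : Matrix (Fin N) (Fin N) R}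
    (hg : HasGaussDecomp I g) (hu : IsUpperUniI I u) : HasGaussDecomp I (g * u) := by
  obtain ⟨b, v, u', rfl, hb, hbI, hv, hu'⟩ := hg
  exact ⟨b, v, u' * u, by simp only [mul_assoc], hb, hbI, hv, hu'.mul hu⟩

lemma hasGaussDecomp_of_isUnit_last_last
    (ih : ∀ A : Matrix (Fin n) (Fin n) R, IsUnit A.det → A.map (Ideal.Quotient.mk I) = 1 →
      HasGaussDecomp I A)
    {M : Matrix (Fin (n + 1)) (Fin (n + 1)) R} (hM : M.map (Ideal.Quotient.mk I) = 1)
    (hdet : IsUnit M.det) (hε : IsUnit (M (Fin.last n) (Fin.last n))) : HasGaussDecomp I M := by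
  obtain ⟨ε, hε⟩ := hε
  set x := fun i : Fin n => M i.castSucc (Fin.last n)
  set y := fun j : Fin n => M (Fin.last n) j.castSucc
  set A' := M.submatrix Fin.castSucc Fin.castSucc - (↑ε⁻¹ : R) • vecMulVec x y
  have hMeq : M = blocksLast (M.submatrix Fin.castSucc Fin.castSucc) x y ε :=
    hε ▸ eq_blocksLast M
  have hx : ∀ i, x i ∈ I := fun i => mem_of_map_mk_eq_one hM (Fin.castSucc_lt_last i).ne
  have hy : ∀ j, y j ∈ I := fun j => mem_of_map_mk_eq_one hM (Fin.castSucc_lt_last j).ne'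
  have hA'det : IsUnit A'.det := by
    rw [hMeq, blocksLast_eq_of_unit, det_mul, det_blocksLast_zero_row,
      det_blocksLast_zero_col] at hdet
    simpa using hdet
  have hA' : A'.map (Ideal.Quotient.mk I) = 1 := by
    ext i j
    have hij := congr_fun (congr_fun hM i.castSucc) j.castSucc
    simpa [A', vecMulVec_apply, one_apply, Ideal.Quotient.eq_zero_iff_mem.mpr (hx i)] using hij
  obtain ⟨b, v, u, hA'eq, hb, hbI, hv, hu⟩ := ih A' hA'det hA'
  refine ⟨blocksLast b x 0 ε, blocksLast v 0 ((↑ε⁻¹ : R) • (y ᵥ* u⁻¹)) 1, blocksLast u 0 0 1,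
    ?_, hb.blocksLast x ε, ?_, isLowerUniI_blocksLast hv ?_,
    isUpperUniI_blocksLast hu fun _ => I.zero_mem⟩
  · rw [blocksLast_mul_blocksLast_mul_blocksLast _ _ _ _ _ _ (hu.det_eq_one ▸ isUnit_one),
      ← hA'eq, sub_add_cancel]
    exact hMeq
  · exact map_mk_blocksLast_eq_one hbI hx (fun _ => I.zero_mem)
      (hε ▸ sub_one_mem_of_map_mk_eq_one hM (Fin.last n))
  · exact fun j => I.mul_mem_left _ (vecMul_mem hy _ j)

theorem SRCond.hasGaussDecomp (hSR : SRCond 1 I) :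
    ∀ {N : ℕ} (g : Matrix (Fin N) (Fin N) R), IsUnit g.det →
      g.map (Ideal.Quotient.mk I) = 1 → HasGaussDecomp I g
  | 0, g, _, hg => ⟨g, 1, 1, (by simp : g = g * 1 * 1), fun i => i.elim0, hg,
      ⟨fun i => i.elim0, fun i => i.elim0, fun i => i.elim0⟩, isUpperUniI_one⟩
  | n + 1, g, hdet, hg => by
    obtain ⟨x, hx, hunit⟩ := hSR.exists_isUnit_mul_blocksLast hg hdet
    have hu₀ : IsUpperUniI I (blocksLast 1 x 0 1) := isUpperUniI_blocksLast isUpperUniI_one hx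
    have hgu₀ : HasGaussDecomp I (g * blocksLast 1 x 0 1) := by
      refine hasGaussDecomp_of_isUnit_last_last (fun A => hSR.hasGaussDecomp A) ?_ ?_ hunit
      · rw [Matrix.map_mul, hg, one_mul]
        exact map_mk_blocksLast_eq_one (by simp) hx (fun _ => I.zero_mem) (by simp)
      · rwa [det_mul, hu₀.det_eq_one, mul_one]
    have hinv : blocksLast 1 x 0 1 * blocksLast 1 (-x) 0 1 = 1 := by
      rw [blocksLast_mul, ← blocksLast_one]
      congr 1 <;> simp
    have h := hgu₀.mul_isUpperUniI
      (isUpperUniI_blocksLast (x := -x) isUpperUniI_one fun i => I.neg_mem (hx i))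
    rwa [mul_assoc, hinv, mul_one] at h

lemma exists_eq_diagonal_mul_isUpperUniI {b : Matrix (Fin n) (Fin n) R}
    (hb : b.IsUpperTriangular) (hbI : b.map (Ideal.Quotient.mk I) = 1) (hdet : IsUnit b.det) :
    ∃ u, diagonal b.diag * u = b ∧ IsUpperUniI I u := by
  have hunit (i : Fin n) : IsUnit (b i i) :=
    isUnit_of_dvd_unit (Finset.dvd_prod_of_mem (fun j => b j j) (Finset.mem_univ i))
      (by rwa [det_of_isUpperTriangular hb] at hdet)
  refine ⟨of fun i j => Ring.inverse (b i i) * b i j, ?_,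
    fun i => Ring.inverse_mul_cancel _ (hunit i), fun i j hij => by simp [hb hij],
    fun i j hij => I.mul_mem_left _ (mem_of_map_mk_eq_one hbI hij.ne)⟩
  ext i j
  simp [← mul_assoc, Ring.mul_inverse_cancel _ (hunit i)]

lemma map_mk_eq_one_of_mem_relElemGroup {g : SpecialLinearGroup (Fin n) R}
    (hg : g ∈ relElemGroup n I) :
    (g : Matrix (Fin n) (Fin n) R).map (Ideal.Quotient.mk I) = 1 := by
  suffices relElemGroup n I ≤ (SpecialLinearGroup.map (Ideal.Quotient.mk I)).ker by
    have h := congr_arg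
      (fun g : SpecialLinearGroup (Fin n) (R ⧸ I) => (g : Matrix (Fin n) (Fin n) (R ⧸ I)))
      (MonoidHom.mem_ker.mp (this hg))
    simpa [SpecialLinearGroup.map_apply_coe] using h
  refine (Subgroup.closure_le _).mpr ?_
  rintro _ ⟨e, -, i, j, hij, s, hs, rfl⟩
  have ht : SpecialLinearGroup.map (Ideal.Quotient.mk I) (tSL i j hij s) = 1 := by
    apply Subtype.ext
    rw [SpecialLinearGroup.map_apply_coe]
    change (Ideal.Quotient.mk I).mapMatrix (transvection i j s) = 1
    rw [transvection, map_add, map_one, RingHom.mapMatrix_apply, map_single,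
      Ideal.Quotient.eq_zero_iff_mem.mpr hs, single_zero, add_zero]
  simp [ht]

end

theorem relative_gauss_SLn_general {R : Type*} [CommRing R] (I : Ideal R) (n : ℕ)
    (hSR : SRCond 1 I) (g : Matrix.SpecialLinearGroup (Fin n) R) (hg : g ∈ relElemGroup n I) :
    ∃ h u₁ v u₂ : Matrix.SpecialLinearGroup (Fin n) R,
      g = h * u₁ * v * u₂ ∧
      (∀ i j : Fin n, i ≠ j → (h : Matrix (Fin n) (Fin n) R) i j = 0) ∧
      (∀ i : Fin n, (h : Matrix (Fin n) (Fin n) R) i i - 1 ∈ I) ∧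
      IsUpperUniI I (u₁ : Matrix (Fin n) (Fin n) R) ∧
      IsLowerUniI I (v : Matrix (Fin n) (Fin n) R) ∧
      IsUpperUniI I (u₂ : Matrix (Fin n) (Fin n) R) := by
  obtain ⟨b, v, u, hg_eq, hb, hbI, hv, hu⟩ :=
    hSR.hasGaussDecomp (g : Matrix (Fin n) (Fin n) R) (by simp)
      (map_mk_eq_one_of_mem_relElemGroup hg)
  have hbdet : b.det = 1 := by
    simpa [hv.det_eq_one, hu.det_eq_one] using (congr_arg det hg_eq).symm
  obtain ⟨u₁, hb_eq, hu₁⟩ := exists_eq_diagonal_mul_isUpperUniI hb hbI (hbdet ▸ isUnit_one)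
  refine ⟨⟨diagonal b.diag, by simpa [det_of_isUpperTriangular hb] using hbdet⟩,
    ⟨u₁, hu₁.det_eq_one⟩, ⟨v, hv.det_eq_one⟩, ⟨u, hu.det_eq_one⟩, ?_,
    fun i j hij => diagonal_apply_ne _ hij,
    fun i => by simpa using sub_one_mem_of_map_mk_eq_one hbI i, hu₁, hv, hu⟩
  apply Subtype.ext
  change (g : Matrix (Fin n) (Fin n) R) = diagonal b.diag * u₁ * v * u
  rw [hg_eq, hb_eq]

/-- Relative Gauss decomposition for `E(n,R,I)` under `sr(I) = 1`. -/
theorem relative_gauss_SLn {R : Type*} [CommRing R] (I : Ideal R) (n : ℕ) (hn : 2 ≤ n)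
    (hSR : SRCond 1 I) (g : Matrix.SpecialLinearGroup (Fin n) R) (hg : g ∈ relElemGroup n I) :
    ∃ h u₁ v u₂ : Matrix.SpecialLinearGroup (Fin n) R,
      g = h * u₁ * v * u₂ ∧
      (∀ i j : Fin n, i ≠ j → (h : Matrix (Fin n) (Fin n) R) i j = 0) ∧
      (∀ i : Fin n, (h : Matrix (Fin n) (Fin n) R) i i - 1 ∈ I) ∧
      IsUpperUniI I (u₁ : Matrix (Fin n) (Fin n) R) ∧
      IsLowerUniI I (v : Matrix (Fin n) (Fin n) R) ∧
      IsUpperUniI I (u₂ : Matrix (Fin n) (Fin n) R) :=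
  relative_gauss_SLn_general I n hSR g hg
end

section
/- Let R be a commutative ring, I an ideal of R, n ≥ 3, and suppose SR_{n−1}(I) holds. Then every g ∈ SL(n,R) with g ≡ 1ₙ (mod I) can be factored as g = u · v · z · w · x · h, where: u is upper unitriangular with all off-diagonal entries in I; v is lower unitriangular with all off-diagonal entries in I; z = t_{1n}(1)⁻¹ · t_{n1}(r) · t_{1n}(1) for some r ∈ I; w is lower unitriangular whose off-diagonal entries are zero except possibly in positions (i,1) with 2 ≤ i ≤ n−1, those entries lying in I; x is upper unitriangular whose off-diagonal entries are zero except possibly in positions (1,j) with 2 ≤ j ≤ n, those entries lying in I; and h has first row and first column equal to those of the identity, h ≡ 1ₙ (mod I), and the lower-right (n−1)×(n−1) block of h lies in SL(n−1,R). (Relative Bass–Kolster decomposition, case Φ = A_{n−1}.) -/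
/-!
The first column `a` of `g` is an `I`-unimodular row of length `n`. The stable range condition
shortens it to an `I`-unimodular row `c` of length `n - 1`, which an upper unitriangular `u`
realises by adding multiples of the last entry. Since `c` is unimodular, a lower unitriangular `v`
replaces the last entry by `r = 1 - c₁ ∈ I`, and the column `(1 - r, c₂, …, c_{n-1}, r)` is
`z w e₁`: `w` puts `c₂, …, c_{n-1}` under the first entry `1`, and `z` moves `r` from the first
entry to the last. So `k = (u v z w)⁻¹ g` has first column `e₁`, and `x = 1 - e₁ sᵀ` with `e₁ + s`
the first row of `k⁻¹` leaves `h = x⁻¹ k` with first row and column those of the identity.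

Each of `u, v, w, x, z` is a transvection `1 + p qᵀ` with `qᵀ p = 0`; congruence modulo `I` is
membership in the kernel of the reduction `SL(n, R) → SL(n, R ⧸ I)`.
-/

open Matrix

/-- `g ≡ 1 (mod I)`, entrywise. -/
def ModI {R : Type*} [CommRing R] (I : Ideal R) {n : ℕ} (g : Matrix (Fin n) (Fin n) R) : Prop :=
  ∀ i j, g i j - (1 : Matrix (Fin n) (Fin n) R) i j ∈ I

open scoped MatrixGroups

section BassKolster

variable {R : Type*} [CommRing R]

section VecTransvection

variable {ι : Type*} [Fintype ι] [DecidableEq ι] {p q : ι → R} {h : q ⬝ᵥ p = 0}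

def vecTransvection (p q : ι → R) (h : q ⬝ᵥ p = 0) : Matrix.SpecialLinearGroup ι R :=
  ⟨1 + vecMulVec p q, by
    rw [vecMulVec_eq Unit, det_one_add_replicateCol_mul_replicateRow, h, add_zero]⟩

theorem coe_vecTransvection : (vecTransvection p q h : Matrix ι ι R) = 1 + vecMulVec p q := rfl

theorem vecTransvection_apply (i j : ι) :
    (vecTransvection p q h : Matrix ι ι R) i j = (1 : Matrix ι ι R) i j + p i * q j := rfl

theorem vecTransvection_smul (v : ι → R) : vecTransvection p q h • v = v + (q ⬝ᵥ v) • p := by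
  simp [Matrix.SpecialLinearGroup.smul_def, coe_vecTransvection, add_mulVec, vecMulVec_mulVec]

theorem vecTransvection_inv :
    (vecTransvection p q h)⁻¹ = vecTransvection (-p) q (by rw [dotProduct_neg, h, neg_zero]) := by
  refine inv_eq_of_mul_eq_one_right (Subtype.ext ?_)
  simp [coe_vecTransvection, add_mul, mul_add, vecMulVec_mul_vecMulVec, h]

end VecTransvection

theorem tSL_eq_vecTransvection {n : ℕ} (i j : Fin n) (hij : i ≠ j) (ξ : R) :
    tSL i j hij ξ =
      vecTransvection (Pi.single i ξ) (Pi.single j 1) (by simp [hij.symm]) := by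
  ext a b
  by_cases ha : i = a <;> by_cases hb : j = b <;>
    simp [tSL, transvection, vecTransvection_apply, ha, hb, eq_comm]

def congruenceSubgroup (I : Ideal R) (n : ℕ) : Subgroup SL(n, R) :=
  (Matrix.SpecialLinearGroup.map (Ideal.Quotient.mk I)).ker

theorem mem_congruenceSubgroup_iff {I : Ideal R} {n : ℕ} {g : SL(n, R)} :
    g ∈ congruenceSubgroup I n ↔ ModI I (g : Matrix (Fin n) (Fin n) R) := by
  rw [congruenceSubgroup, MonoidHom.mem_ker, Matrix.SpecialLinearGroup.ext_iff]
  simp [ModI, ← Ideal.Quotient.eq, Matrix.one_apply, apply_ite (Ideal.Quotient.mk I)]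

theorem vecTransvection_mem_congruenceSubgroup {I : Ideal R} {n : ℕ} {p q : Fin n → R}
    (h : q ⬝ᵥ p = 0) (hpq : ∀ i j, p i * q j ∈ I) :
    vecTransvection p q h ∈ congruenceSubgroup I n := by
  rw [mem_congruenceSubgroup_iff]
  intro i j
  simpa [vecTransvection_apply] using hpq i j

theorem tSL_mem_congruenceSubgroup {I : Ideal R} {n : ℕ} {i j : Fin n} (hij : i ≠ j) {ξ : R}
    (hξ : ξ ∈ I) : tSL i j hij ξ ∈ congruenceSubgroup I n := by
  rw [tSL_eq_vecTransvection]
  refine vecTransvection_mem_congruenceSubgroup _ fun a b => I.mul_mem_right _ ?_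
  rw [Pi.single_apply]
  split_ifs
  exacts [hξ, I.zero_mem]

section Shapes

variable (I : Ideal R) {m : ℕ}

def IsUpperUnitriangularMod {n : ℕ} (A : Matrix (Fin n) (Fin n) R) : Prop :=
  (∀ i, A i i = 1) ∧ (∀ i j : Fin n, j < i → A i j = 0) ∧ (∀ i j : Fin n, i < j → A i j ∈ I)

def IsLowerUnitriangularMod {n : ℕ} (A : Matrix (Fin n) (Fin n) R) : Prop :=
  (∀ i, A i i = 1) ∧ (∀ i j : Fin n, i < j → A i j = 0) ∧ (∀ i j : Fin n, j < i → A i j ∈ I)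

def IsFirstColumnUnipotentMod (A : Matrix (Fin (m + 1)) (Fin (m + 1)) R) : Prop :=
  (∀ i, A i i = 1) ∧ (∀ i, i ≠ 0 → i ≠ Fin.last m → A i 0 ∈ I) ∧
    (∀ i j, i ≠ j → (j ≠ 0 ∨ i = Fin.last m) → A i j = 0)

def IsFirstRowUnipotentMod (A : Matrix (Fin (m + 1)) (Fin (m + 1)) R) : Prop :=
  (∀ i, A i i = 1) ∧ (∀ j, j ≠ 0 → A 0 j ∈ I) ∧ (∀ i j, i ≠ j → i ≠ 0 → A i j = 0)

variable {I}

theorem isUpperUnitriangularMod_vecTransvection {p : Fin (m + 1) → R} (hpI : ∀ i, p i ∈ I)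
    {h : Pi.single (Fin.last m) 1 ⬝ᵥ p = 0} :
    IsUpperUnitriangularMod I
      (vecTransvection p (Pi.single (Fin.last m) 1) h : Matrix (Fin (m + 1)) (Fin (m + 1)) R) := by
  have hp : p (Fin.last m) = 0 := by simpa using h
  refine ⟨fun i => ?_, fun i j hji => ?_, fun i j hij => ?_⟩ <;>
    simp only [vecTransvection_apply, one_apply, Pi.single_apply]
  · split_ifs with hi <;> simp_all
  · have hj : j ≠ Fin.last m := (hji.trans_le (Fin.le_last i)).ne
    simp [hji.ne', hj]
  · rw [if_neg hij.ne, zero_add]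
    exact I.mul_mem_right _ (hpI i)

theorem isLowerUnitriangularMod_vecTransvection {q : Fin (m + 1) → R} (hqI : ∀ j, q j ∈ I)
    {h : q ⬝ᵥ Pi.single (Fin.last m) 1 = 0} :
    IsLowerUnitriangularMod I
      (vecTransvection (Pi.single (Fin.last m) 1) q h : Matrix (Fin (m + 1)) (Fin (m + 1)) R) := by
  have hq : q (Fin.last m) = 0 := by simpa using h
  refine ⟨fun i => ?_, fun i j hij => ?_, fun i j hji => ?_⟩ <;>
    simp only [vecTransvection_apply, one_apply, Pi.single_apply]
  · split_ifs with hi <;> simp_all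
  · have hi : i ≠ Fin.last m := (hij.trans_le (Fin.le_last j)).ne
    simp [hij.ne, hi]
  · rw [if_neg hji.ne', zero_add]
    exact I.mul_mem_left _ (hqI j)

theorem isFirstColumnUnipotentMod_vecTransvection {p : Fin (m + 1) → R} (hpI : ∀ i, p i ∈ I)
    (hp : p (Fin.last m) = 0) {h : Pi.single 0 1 ⬝ᵥ p = 0} :
    IsFirstColumnUnipotentMod I
      (vecTransvection p (Pi.single 0 1) h : Matrix (Fin (m + 1)) (Fin (m + 1)) R) := by
  have hp₀ : p 0 = 0 := by simpa using h
  refine ⟨fun i => ?_, fun i hi _ => ?_, fun i j hij hji => ?_⟩ <;>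
    simp only [vecTransvection_apply, one_apply, Pi.single_apply]
  · split_ifs with hi <;> simp_all
  · simpa [hi] using hpI i
  · rcases hji with hj | rfl
    · simp [hij, hj]
    · simp [hij, hp]

theorem isFirstRowUnipotentMod_vecTransvection {q : Fin (m + 1) → R} (hqI : ∀ j, q j ∈ I)
    {h : q ⬝ᵥ Pi.single 0 1 = 0} :
    IsFirstRowUnipotentMod I
      (vecTransvection (Pi.single 0 1) q h : Matrix (Fin (m + 1)) (Fin (m + 1)) R) := by
  have hq₀ : q 0 = 0 := by simpa using h
  refine ⟨fun i => ?_, fun j hj => ?_, fun i j hij hi => ?_⟩ <;>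
    simp only [vecTransvection_apply, one_apply, Pi.single_apply]
  · split_ifs with hi <;> simp_all
  · simpa [hj.symm] using hqI j
  · simp [hij, hi]

end Shapes

theorem isIUnimodular_smul_single_zero {I : Ideal R} {n : ℕ} [NeZero n] {g : SL(n, R)}
    (hg : ModI I (g : Matrix (Fin n) (Fin n) R)) :
    IsIUnimodular I (g • (Pi.single 0 1 : Fin n → R)) := by
  refine ⟨fun i hi => ?_, fun i hi => ?_, ?_⟩
  · obtain rfl : i = 0 := Fin.ext hi
    simpa [Matrix.SpecialLinearGroup.smul_def] using hg 0 0
  · have hi : i ≠ 0 := fun h => hi (by simp [h])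
    simpa [Matrix.SpecialLinearGroup.smul_def, one_apply, hi] using hg i 0
  · rw [Ideal.eq_top_iff_one, Ideal.mem_span_range_iff_exists_fun]
    refine ⟨(↑g⁻¹ : Matrix (Fin n) (Fin n) R) 0, ?_⟩
    simpa [Matrix.SpecialLinearGroup.smul_def, mulVec, dotProduct, Pi.single_apply] using
      congrFun (inv_smul_smul g (Pi.single 0 1 : Fin n → R)) 0

section FirstColumn

variable {m : ℕ}

theorem snoc_zero_mem {I : Ideal R} {x : Fin m → R} (hx : ∀ i, x i ∈ I) (i : Fin (m + 1)) :
    (Fin.snoc x 0 : Fin (m + 1) → R) i ∈ I := by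
  refine Fin.lastCases ?_ (fun i => ?_) i <;> simp [hx]

theorem vecTransvection_snoc_smul_snoc (b x : Fin m → R) (s : R)
    {h : Pi.single (Fin.last m) 1 ⬝ᵥ Fin.snoc b 0 = 0} :
    vecTransvection (Fin.snoc b 0) (Pi.single (Fin.last m) 1) h • (Fin.snoc x s : Fin (m + 1) → R) =
      Fin.snoc (x + s • b) s := by
  rw [vecTransvection_smul]
  ext i
  refine Fin.lastCases ?_ (fun i => ?_) i <;> simp

theorem vecTransvection_single_last_smul_snoc (l x : Fin m → R) (s : R)
    {h : Fin.snoc l 0 ⬝ᵥ Pi.single (Fin.last m) 1 = 0} :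
    vecTransvection (Pi.single (Fin.last m) 1) (Fin.snoc l 0) h • (Fin.snoc x s : Fin (m + 1) → R) =
      Fin.snoc x (s + l ⬝ᵥ x) := by
  rw [vecTransvection_smul]
  ext i
  refine Fin.lastCases ?_ (fun i => ?_) i <;> simp [dotProduct, Fin.sum_univ_castSucc]

variable [NeZero m]

theorem vecTransvection_update_smul_single_zero (c : Fin m → R)
    {h : Pi.single 0 1 ⬝ᵥ Fin.snoc (Function.update c 0 0) 0 = 0} :
    vecTransvection (Fin.snoc (Function.update c 0 0) 0) (Pi.single 0 1) h •
      (Pi.single 0 1 : Fin (m + 1) → R) = Fin.snoc (Function.update c 0 1) 0 := by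
  rw [vecTransvection_smul]
  ext i
  refine Fin.lastCases ?_ (fun i => ?_) i
  · simp [Fin.last_pos'.ne']
  · by_cases hi : i = 0 <;> simp [hi]

theorem conj_tSL_smul_snoc (y : Fin m → R) (hy : y 0 = 1) (r : R) :
    ((tSL 0 (Fin.last m) Fin.last_pos'.ne 1)⁻¹ * tSL (Fin.last m) 0 Fin.last_pos'.ne' r *
      tSL 0 (Fin.last m) Fin.last_pos'.ne 1) • (Fin.snoc y 0 : Fin (m + 1) → R) =
      Fin.snoc (Function.update y 0 (1 - r)) r := by
  simp only [tSL_eq_vecTransvection, vecTransvection_inv, mul_smul, vecTransvection_smul]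
  ext i
  refine Fin.lastCases ?_ (fun i => ?_) i
  · simp [hy, Fin.last_pos'.ne']
  · by_cases hi : i = 0 <;> simp [hi, hy, Fin.last_pos'.ne, sub_eq_add_neg]

theorem exists_factors_smul_single_zero_eq {I : Ideal R} (hSR : SRCond m I)
    {a : Fin (m + 1) → R} (ha : IsIUnimodular I a) :
    ∃ u v z w : SL(m + 1, R), ∃ r ∈ I,
      IsUpperUnitriangularMod I (u : Matrix (Fin (m + 1)) (Fin (m + 1)) R) ∧
      IsLowerUnitriangularMod I (v : Matrix (Fin (m + 1)) (Fin (m + 1)) R) ∧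
      z = (tSL 0 (Fin.last m) Fin.last_pos'.ne 1)⁻¹ * tSL (Fin.last m) 0 Fin.last_pos'.ne' r *
        tSL 0 (Fin.last m) Fin.last_pos'.ne 1 ∧
      IsFirstColumnUnipotentMod I (w : Matrix (Fin (m + 1)) (Fin (m + 1)) R) ∧
      u * v * z * w ∈ congruenceSubgroup I (m + 1) ∧
      (u * v * z * w) • (Pi.single 0 1 : Fin (m + 1) → R) = a := by
  obtain ⟨b, hbI, hc⟩ := hSR a ha
  set c : Fin m → R := fun i => a i.castSucc + a (Fin.last m) * b i
  set r := 1 - c 0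
  have hr : r ∈ I := by simpa [r] using neg_mem (hc.1 0 rfl)
  have haL : a (Fin.last m) ∈ I := ha.2.1 _ (NeZero.ne m)
  obtain ⟨μ, hμ⟩ : ∃ μ : Fin m → R, μ ⬝ᵥ c = 1 :=
    Ideal.mem_span_range_iff_exists_fun.1 (hc.2.2 ▸ Submodule.mem_top)
  let u := vecTransvection (Fin.snoc (-b) 0) (Pi.single (Fin.last m) 1) (by simp)
  let v := vecTransvection (Pi.single (Fin.last m) 1) (Fin.snoc ((a (Fin.last m) - r) • μ) 0)
    (by simp)
  let z : SL(m + 1, R) := (tSL 0 (Fin.last m) Fin.last_pos'.ne 1)⁻¹ *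
    tSL (Fin.last m) 0 Fin.last_pos'.ne' r * tSL 0 (Fin.last m) Fin.last_pos'.ne 1
  let w := vecTransvection (Fin.snoc (Function.update c 0 0) 0) (Pi.single 0 1) (by simp)
  have hcI : ∀ i, Function.update c 0 0 i ∈ I := fun i => by
    by_cases hi : i = 0
    · simp [hi]
    · simpa [hi] using hc.2.1 i (fun h => hi (Fin.ext h))
  refine ⟨u, v, z, w, r, hr,
    isUpperUnitriangularMod_vecTransvection (snoc_zero_mem fun i => neg_mem (hbI i)),
    isLowerUnitriangularMod_vecTransvection
      (snoc_zero_mem fun i => I.mul_mem_right _ (sub_mem haL hr)),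
    rfl, isFirstColumnUnipotentMod_vecTransvection (snoc_zero_mem hcI) (by simp), ?_, ?_⟩
  · refine mul_mem (mul_mem (mul_mem ?_ ?_) ?_) ?_
    · exact vecTransvection_mem_congruenceSubgroup _ fun i j =>
        I.mul_mem_right _ (snoc_zero_mem (fun i => neg_mem (hbI i)) i)
    · exact vecTransvection_mem_congruenceSubgroup _ fun i j =>
        I.mul_mem_left _ (snoc_zero_mem (fun i => I.mul_mem_right _ (sub_mem haL hr)) j)
    · exact (MonoidHom.normal_ker _).conj_mem' _ (tSL_mem_congruenceSubgroup _ hr) _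
    · exact vecTransvection_mem_congruenceSubgroup _ fun i j =>
        I.mul_mem_right _ (snoc_zero_mem hcI i)
  · have hc₀ : 1 - r = c 0 := sub_sub_cancel 1 (c 0)
    rw [mul_smul, vecTransvection_update_smul_single_zero, mul_smul,
      conj_tSL_smul_snoc _ (by simp) r, Function.update_idem, hc₀, Function.update_eq_self,
      mul_smul, vecTransvection_single_last_smul_snoc, smul_dotProduct, hμ, smul_eq_mul,
      mul_one, add_sub_cancel, vecTransvection_snoc_smul_snoc]
    conv_rhs => rw [← Fin.snoc_init_self a]
    congr 1
    ext i
    simp [c, Fin.init]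

end FirstColumn

theorem det_submatrix_succ_of_row_zero {m : ℕ} {A : Matrix (Fin (m + 1)) (Fin (m + 1)) R}
    (hA : ∀ j, A 0 j = (1 : Matrix (Fin (m + 1)) (Fin (m + 1)) R) 0 j) :
    (A.submatrix Fin.succ Fin.succ).det = A.det := by
  rw [det_succ_row_zero, Fin.sum_univ_succ]
  simp [hA, one_apply, (Fin.succ_ne_zero _).symm]

theorem exists_eq_mul_of_smul_single_zero {I : Ideal R} {m : ℕ} {k : SL(m + 1, R)}
    (hk : k ∈ congruenceSubgroup I (m + 1))
    (hcol : k • (Pi.single 0 1 : Fin (m + 1) → R) = Pi.single 0 1) :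
    ∃ x h : SL(m + 1, R), k = x * h ∧
      IsFirstRowUnipotentMod I (x : Matrix (Fin (m + 1)) (Fin (m + 1)) R) ∧
      (∀ j, (h : Matrix (Fin (m + 1)) (Fin (m + 1)) R) 0 j =
        (1 : Matrix (Fin (m + 1)) (Fin (m + 1)) R) 0 j) ∧
      (∀ i, (h : Matrix (Fin (m + 1)) (Fin (m + 1)) R) i 0 =
        (1 : Matrix (Fin (m + 1)) (Fin (m + 1)) R) i 0) ∧
      ModI I (h : Matrix (Fin (m + 1)) (Fin (m + 1)) R) ∧
      ((h : Matrix (Fin (m + 1)) (Fin (m + 1)) R).submatrix Fin.succ Fin.succ).det = 1 := by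
  set e₀ : Fin (m + 1) → R := Pi.single 0 1
  have hcol_inv : (↑k⁻¹ : Matrix (Fin (m + 1)) (Fin (m + 1)) R) *ᵥ e₀ = e₀ := by
    rw [← smul_eq_mulVec, ← Matrix.SpecialLinearGroup.smul_def, inv_smul_eq_iff, hcol]
  set q := e₀ ᵥ* (↑k⁻¹ : Matrix (Fin (m + 1)) (Fin (m + 1)) R) - e₀
  have hq₀ : q ⬝ᵥ e₀ = 0 := by
    rw [sub_dotProduct, ← dotProduct_mulVec, hcol_inv, sub_self]
  have hqI : ∀ j, q j ∈ I := fun j => by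
    simpa [q, e₀, one_apply, Pi.single_apply, eq_comm] using
      mem_congruenceSubgroup_iff.1 (inv_mem hk) 0 j
  let x := vecTransvection e₀ (-q) (by rw [neg_dotProduct, hq₀, neg_zero])
  set h := x⁻¹ * k
  have hrow : e₀ ᵥ* (h : Matrix (Fin (m + 1)) (Fin (m + 1)) R) = e₀ := by
    have he₀ : e₀ ⬝ᵥ e₀ = 1 := by simp [e₀]
    rw [Matrix.SpecialLinearGroup.coe_mul, ← vecMul_vecMul, vecTransvection_inv,
      coe_vecTransvection, vecMul_add, vecMul_one, vecMul_vecMulVec, dotProduct_neg, he₀,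
      neg_smul, one_smul, neg_neg, add_sub_cancel, vecMul_vecMul,
      ← Matrix.SpecialLinearGroup.coe_mul, inv_mul_cancel, Matrix.SpecialLinearGroup.coe_one,
      vecMul_one]
  have hcol' : h • e₀ = e₀ := by
    rw [mul_smul, hcol, vecTransvection_inv, vecTransvection_smul, neg_dotProduct, hq₀]
    simp
  refine ⟨x, h, (mul_inv_cancel_left x k).symm,
    isFirstRowUnipotentMod_vecTransvection (fun j => neg_mem (hqI j)), fun j => ?_, fun i => ?_,
    mem_congruenceSubgroup_iff.1 (mul_mem (inv_mem ?_) hk), ?_⟩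
  · simpa [e₀, one_apply, Pi.single_apply, eq_comm] using congrFun hrow j
  · simpa [e₀, Matrix.SpecialLinearGroup.smul_def, one_apply, Pi.single_apply, eq_comm] using
      congrFun hcol' i
  · exact vecTransvection_mem_congruenceSubgroup _ fun i j => I.mul_mem_left _ (neg_mem (hqI j))
  · rw [det_submatrix_succ_of_row_zero, h.2]
    simpa [e₀, one_apply, Pi.single_apply, eq_comm] using congrFun hrow

end BassKolster

/-- Relative Bass–Kolster decomposition for `SL(n, R, I)`. -/
theorem relative_bass_kolster {R : Type*} [CommRing R] (I : Ideal R) (n : ℕ) (hn : 3 ≤ n)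
    (hSR : SRCond (n - 1) I) (g : Matrix.SpecialLinearGroup (Fin n) R)
    (hg : ModI I (g : Matrix (Fin n) (Fin n) R)) :
    ∃ u v z w x h : Matrix.SpecialLinearGroup (Fin n) R, ∃ r ∈ I,
      g = u * v * z * w * x * h ∧
      -- u is upper unitriangular with off-diagonal entries in I
      ((∀ i, (u : Matrix (Fin n) (Fin n) R) i i = 1) ∧
        (∀ i j : Fin n, j < i → (u : Matrix (Fin n) (Fin n) R) i j = 0) ∧
        (∀ i j : Fin n, i < j → (u : Matrix (Fin n) (Fin n) R) i j ∈ I)) ∧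
      -- v is lower unitriangular with off-diagonal entries in I
      ((∀ i, (v : Matrix (Fin n) (Fin n) R) i i = 1) ∧
        (∀ i j : Fin n, i < j → (v : Matrix (Fin n) (Fin n) R) i j = 0) ∧
        (∀ i j : Fin n, j < i → (v : Matrix (Fin n) (Fin n) R) i j ∈ I)) ∧
      -- z = t_{1n}(1)⁻¹ t_{n1}(r) t_{1n}(1)
      z = (tSL (⟨0, by omega⟩ : Fin n) ⟨n - 1, by omega⟩ (by simp; omega) 1)⁻¹ *
            tSL (⟨n - 1, by omega⟩ : Fin n) ⟨0, by omega⟩ (by simp; omega) r *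
            tSL (⟨0, by omega⟩ : Fin n) ⟨n - 1, by omega⟩ (by simp; omega) 1 ∧
      -- w is lower unitriangular, zero off the diagonal except in positions (i,1),
      -- 2 ≤ i ≤ n-1, those entries lying in I
      ((∀ i, (w : Matrix (Fin n) (Fin n) R) i i = 1) ∧
        (∀ i : Fin n, i ≠ ⟨0, by omega⟩ → i ≠ ⟨n - 1, by omega⟩ →
          (w : Matrix (Fin n) (Fin n) R) i ⟨0, by omega⟩ ∈ I) ∧
        (∀ i j : Fin n, i ≠ j → (j ≠ ⟨0, by omega⟩ ∨ i = ⟨n - 1, by omega⟩) →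
          (w : Matrix (Fin n) (Fin n) R) i j = 0)) ∧
      -- x is upper unitriangular, zero off the diagonal except in the first row,
      -- those entries lying in I
      ((∀ i, (x : Matrix (Fin n) (Fin n) R) i i = 1) ∧
        (∀ j : Fin n, j ≠ ⟨0, by omega⟩ →
          (x : Matrix (Fin n) (Fin n) R) (⟨0, by omega⟩ : Fin n) j ∈ I) ∧
        (∀ i j : Fin n, i ≠ j → i ≠ ⟨0, by omega⟩ →
          (x : Matrix (Fin n) (Fin n) R) i j = 0)) ∧
      -- h has first row and column of the identity, h ≡ 1 mod I, and its lower-right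
      -- (n-1)×(n-1) block has determinant 1 (i.e. lies in SL(n-1,R))
      ((∀ j : Fin n, (h : Matrix (Fin n) (Fin n) R) (⟨0, by omega⟩ : Fin n) j =
          (1 : Matrix (Fin n) (Fin n) R) (⟨0, by omega⟩ : Fin n) j) ∧
        (∀ i : Fin n, (h : Matrix (Fin n) (Fin n) R) i ⟨0, by omega⟩ =
          (1 : Matrix (Fin n) (Fin n) R) i ⟨0, by omega⟩) ∧
        ModI I (h : Matrix (Fin n) (Fin n) R) ∧
        ((h : Matrix (Fin n) (Fin n) R).submatrix
          (fun i : Fin (n - 1) => (⟨(i : ℕ) + 1, by have := i.isLt; omega⟩ : Fin n))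
          (fun j : Fin (n - 1) => (⟨(j : ℕ) + 1, by have := j.isLt; omega⟩ : Fin n))).det = 1) := by
  obtain ⟨m, rfl⟩ : ∃ m, n = m + 1 := ⟨n - 1, by omega⟩
  have : NeZero m := ⟨by omega⟩
  obtain ⟨u, v, z, w, r, hr, hu, hv, hz, hw, huvzw, hcol⟩ :=
    exists_factors_smul_single_zero_eq (m := m) hSR (isIUnimodular_smul_single_zero hg)
  obtain ⟨x, h, hxh, hx, hh⟩ := exists_eq_mul_of_smul_single_zero
    (k := (u * v * z * w)⁻¹ * g) (mul_mem (inv_mem huvzw) (mem_congruenceSubgroup_iff.2 hg))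
    (by rw [mul_smul, ← hcol, inv_smul_smul])
  refine ⟨u, v, z, w, x, h, r, hr, ?_, hu, hv, hz, hw, hx, hh⟩
  rw [inv_mul_eq_iff_eq_mul] at hxh
  simp only [hxh, mul_assoc]
end

section
/- Let R be a commutative ring, I an ideal of R, n ≥ 1, v = (v₁,…,vₙ)ᵀ ∈ Rⁿ a column, and v' = (v₁², …, vₙ²)ᵀ the column of squares of its components. Then for every n×n matrix b with all entries in I there exists a symmetric n×n matrix a (aᵀ = a) with all entries in I such that b·v' = a·v. (Lemma: the symplectic squaring trick.) -/
open Matrix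

/-!
Write `v' = D v` with `D = diagonal v`, so that `b v' = c v` for `c = b D`. Since `D` is
diagonal, `cᵀ v = D (bᵀ v) = diagonal (bᵀ v) v`; hence the symmetric matrix
`c + cᵀ - diagonal (bᵀ v)`, whose entries are in `I` as soon as those of `b` are,
also sends `v` to `c v`.
-/

namespace Matrix

variable {ι R : Type*} [Fintype ι] [DecidableEq ι] [CommRing R]

def squaringSymm (b : Matrix ι ι R) (v : ι → R) : Matrix ι ι R :=
  b * diagonal v + (b * diagonal v)ᵀ - diagonal (bᵀ *ᵥ v)

theorem squaringSymm_isSymm (b : Matrix ι ι R) (v : ι → R) : (squaringSymm b v).IsSymm := by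
  simp only [IsSymm, squaringSymm, transpose_sub, transpose_add, transpose_transpose,
    diagonal_transpose, add_comm]

theorem squaringSymm_mulVec (b : Matrix ι ι R) (v : ι → R) :
    squaringSymm b v *ᵥ v = b *ᵥ fun i => v i ^ 2 := by
  have hsq : (fun i => v i ^ 2) = diagonal v *ᵥ v := by
    ext i
    rw [mulVec_diagonal, sq]
  have htranspose : (b * diagonal v)ᵀ *ᵥ v = diagonal (bᵀ *ᵥ v) *ᵥ v := by
    ext i
    rw [transpose_mul, diagonal_transpose, ← mulVec_mulVec, mulVec_diagonal, mulVec_diagonal,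
      mul_comm]
  rw [squaringSymm, sub_mulVec, add_mulVec, htranspose, add_sub_cancel_right, hsq,
    mulVec_mulVec]

theorem squaringSymm_mem {I : Ideal R} {b : Matrix ι ι R} (hb : ∀ i j, b i j ∈ I)
    (v : ι → R) (i j : ι) : squaringSymm b v i j ∈ I := by
  have hdiag : diagonal (bᵀ *ᵥ v) i j ∈ I := by
    rw [diagonal_apply]
    split_ifs
    · exact I.sum_mem fun k _ => I.mul_mem_right _ (hb k i)
    · exact I.zero_mem
  simp only [squaringSymm, sub_apply, add_apply, transpose_apply, mul_diagonal]
  exact I.sub_mem (I.add_mem (I.mul_mem_right _ (hb i j)) (I.mul_mem_right _ (hb j i))) hdiag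

end Matrix

theorem symplectic_squaring_trick_general {R : Type*} [CommRing R] (I : Ideal R) (n : ℕ)
    (v : Fin n → R) (b : Matrix (Fin n) (Fin n) R) (hb : ∀ i j, b i j ∈ I) :
    ∃ a : Matrix (Fin n) (Fin n) R,
      aᵀ = a ∧ (∀ i j, a i j ∈ I) ∧
      b.mulVec (fun i => v i ^ 2) = a.mulVec v :=
  ⟨squaringSymm b v, squaringSymm_isSymm b v, squaringSymm_mem hb v,
    (squaringSymm_mulVec b v).symm⟩

/-- The symplectic squaring trick: for any matrix `b` over `I` there is a symmetric matrix
`a` over `I` with `b·v' = a·v`, where `v'` is the column of squares of `v`. -/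
theorem symplectic_squaring_trick {R : Type*} [CommRing R] (I : Ideal R) (n : ℕ) (hn : 1 ≤ n)
    (v : Fin n → R) (b : Matrix (Fin n) (Fin n) R) (hb : ∀ i j, b i j ∈ I) :
    ∃ a : Matrix (Fin n) (Fin n) R,
      aᵀ = a ∧ (∀ i j, a i j ∈ I) ∧
      b.mulVec (fun i => v i ^ 2) = a.mulVec v :=
  symplectic_squaring_trick_general I n v b hb
end

section
/- Let R be a commutative ring, I an ideal of R, ℓ ≥ 2, and suppose SR_ℓ(I) holds. Then for every I-unimodular column v ∈ R^{2ℓ}, writing v₊ = (v₁,…,v_ℓ)ᵀ and v₋ = (v_{ℓ+1},…,v_{2ℓ})ᵀ for its upper and lower halves, there exists a symmetric ℓ×ℓ matrix a (aᵀ = a) with all entries in I such that the column v₊ + p·a·v₋ ∈ R^ℓ is I-unimodular. (Lemma on the action of the symplectic unipotent radical, case Φ = C_ℓ.) -/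
open Matrix

/-- The `ℓ×ℓ` antidiagonal permutation matrix `p` with `p_{ij} = 1` iff `j = ℓ+1−i`
(0-indexed: `j = ℓ−1−i`). -/
def pAntidiag (R : Type*) [CommRing R] (l : ℕ) : Matrix (Fin l) (Fin l) R :=
  fun i j => if (j : ℕ) = l - 1 - (i : ℕ) then 1 else 0

/-!
Write `1 = s + x ⬝ v₋` with `s` in the ideal generated by `v₊`, and put `j = x ⬝ v₋ ∈ I`.
Then `1 - j² = s (1 + j)`, so `(v₊, j²)` is an `I`-unimodular column of length `ℓ + 1`, and
`SR_ℓ(I)` gives `b ∈ Iˡ` with `v₊ + j² b` unimodular. It remains to realise `j² b` as `p a v₋` with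
`a` symmetric over `I`: for `β = p b` the matrix `a = j (β xᵀ + x βᵀ) - (β ⬝ v₋) x xᵀ` is
symmetric and satisfies `a v₋ = j² β`.
-/

section

variable {R : Type*} [CommRing R]

theorem pAntidiag_mulVec {l : ℕ} (w : Fin l → R) : pAntidiag R l *ᵥ w = fun i => w i.rev := by
  ext i
  have hp : pAntidiag R l i = Pi.single i.rev 1 := by
    ext j
    simp only [pAntidiag, Pi.single_apply, Fin.ext_iff, Fin.val_rev,
      show l - (i + 1) = l - 1 - i by omega]
  simp [mulVec, hp]

theorem exists_symm_mulVec_eq_sq_smul {ι : Type*} [Fintype ι] (I : Ideal R) (x u β : ι → R)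
    (hβ : ∀ i, β i ∈ I) :
    ∃ a : Matrix ι ι R, aᵀ = a ∧ (∀ i j, a i j ∈ I) ∧ a *ᵥ u = (x ⬝ᵥ u) ^ 2 • β := by
  refine ⟨(x ⬝ᵥ u) • (vecMulVec β x + vecMulVec x β) - (β ⬝ᵥ u) • vecMulVec x x, ?_, ?_, ?_⟩
  · simp only [transpose_sub, transpose_smul, transpose_add, transpose_vecMulVec, add_comm]
  · intro i j
    have hβu : β ⬝ᵥ u ∈ I := Ideal.sum_mem _ fun k _ => I.mul_mem_right _ (hβ k)
    simp only [Matrix.sub_apply, Matrix.smul_apply, Matrix.add_apply, vecMulVec_apply, smul_eq_mul]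
    exact sub_mem (I.mul_mem_left _ (add_mem (I.mul_mem_right _ (hβ i))
      (I.mul_mem_left _ (hβ j)))) (I.mul_mem_right _ hβu)
  · simp only [sub_mulVec, smul_mulVec, add_mulVec, vecMulVec_mulVec, op_smul_eq_smul,
      smul_add, smul_smul, dotProduct_comm β u, mul_comm (u ⬝ᵥ β), sq, add_sub_cancel_right]

theorem isIUnimodular_snoc {I : Ideal R} {n : ℕ} {u : Fin n → R} {c : R}
    (hu₀ : ∀ i : Fin n, (i : ℕ) = 0 → u i - 1 ∈ I) (hu : ∀ i : Fin n, (i : ℕ) ≠ 0 → u i ∈ I)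
    (hc : c ∈ I) (h1c : 1 - c ∈ Ideal.span (Set.range u)) :
    IsIUnimodular I (Fin.snoc u c : Fin (n + 1) → R) := by
  refine ⟨fun i => ?_, fun i => ?_, ?_⟩
  · induction i using Fin.lastCases with
    | last =>
      intro hn
      rw [Fin.snoc_last, ← neg_sub]
      obtain rfl : n = 0 := by simpa using hn
      rw [Set.range_eq_empty, Ideal.span_empty, Submodule.mem_bot] at h1c
      simp [h1c]
    | cast i => simpa using hu₀ i
  · induction i using Fin.lastCases with
    | last => simpa using fun _ => hc
    | cast i => simpa using hu i
  · rw [Ideal.eq_top_iff_one, ← sub_add_cancel 1 c]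
    refine add_mem (Ideal.span_mono ?_ h1c) (Ideal.subset_span ⟨Fin.last n, by simp⟩)
    rintro _ ⟨i, rfl⟩
    exact ⟨i.castSucc, by simp⟩

variable {l : ℕ}

def upperHalf (v : Fin (2 * l) → R) : Fin l → R := fun i => v ⟨i, by omega⟩

def lowerHalf (v : Fin (2 * l) → R) : Fin l → R := fun k => v ⟨l + k, by omega⟩

theorem exists_add_dotProduct_lowerHalf_eq_one {v : Fin (2 * l) → R}
    (hv : Ideal.span (Set.range v) = ⊤) :
    ∃ s ∈ Ideal.span (Set.range (upperHalf v)), ∃ x : Fin l → R, s + x ⬝ᵥ lowerHalf v = 1 := by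
  have hrange : Set.range v ⊆ Set.range (upperHalf v) ∪ Set.range (lowerHalf v) := by
    rintro _ ⟨i, rfl⟩
    by_cases hi : (i : ℕ) < l
    · exact Or.inl ⟨⟨i, hi⟩, rfl⟩
    · exact Or.inr ⟨⟨i - l, by omega⟩, congrArg v (Fin.ext (by simp only; omega))⟩
  have h1 : (1 : R) ∈
      Ideal.span (Set.range (upperHalf v)) ⊔ Ideal.span (Set.range (lowerHalf v)) := by
    rw [← Ideal.span_union]
    exact Ideal.span_mono hrange (hv ▸ Submodule.mem_top)
  obtain ⟨s, hs, y, hy, hsy⟩ := Submodule.mem_sup.mp h1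
  obtain ⟨x, rfl⟩ := (Submodule.mem_span_range_iff_exists_fun _).mp hy
  exact ⟨s, hs, x, hsy⟩

end

/-- Action of the symplectic unipotent radical on unimodular columns (case `C_ℓ`). -/
theorem symplectic_unipotent_action {R : Type*} [CommRing R] (I : Ideal R) (l : ℕ)
    (hSR : SRCond l I) (v : Fin (2 * l) → R) (hv : IsIUnimodular I v) :
    ∃ a : Matrix (Fin l) (Fin l) R,
      aᵀ = a ∧ (∀ i j, a i j ∈ I) ∧
      IsIUnimodular I (fun i : Fin l =>
        v (⟨(i : ℕ), by have := i.isLt; omega⟩ : Fin (2 * l)) +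
          (pAntidiag R l * a).mulVec
            (fun k : Fin l => v (⟨l + (k : ℕ), by have := k.isLt; omega⟩ : Fin (2 * l))) i) := by
  obtain ⟨hv₀, hvI, hv⟩ := hv
  obtain ⟨s, hs, x, hsx⟩ := exists_add_dotProduct_lowerHalf_eq_one hv
  set j := x ⬝ᵥ lowerHalf v
  have hj : j ∈ I := Ideal.sum_mem _ fun k _ => I.mul_mem_left _ (hvI _ (by dsimp only; omega))
  have h1j : 1 - j ^ 2 = s * (1 + j) := by linear_combination (-(1 + j)) * hsx
  obtain ⟨b, hb, hbu⟩ := hSR _ (isIUnimodular_snoc (fun i => hv₀ ⟨i, _⟩) (fun i => hvI ⟨i, _⟩)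
    (I.pow_mem_of_mem hj 2 two_pos) (h1j ▸ Ideal.mul_mem_right _ _ hs))
  obtain ⟨a, ha, haI, hav⟩ :=
    exists_symm_mulVec_eq_sq_smul I x (lowerHalf v) (fun i => b i.rev) fun i => hb _
  have hpav : (pAntidiag R l * a) *ᵥ lowerHalf v = j ^ 2 • b := by
    rw [← mulVec_mulVec, hav, pAntidiag_mulVec]
    ext i
    simp [j]
  refine ⟨a, ha, haI, ?_⟩
  convert hbu using 2 with i
  simp only [Fin.snoc_castSucc, Fin.snoc_last]
  exact congrArg (v _ + ·) (congrFun hpav i)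
end

section
/- Let R be a commutative ring, I an ideal of R, and n ≥ 1. The following two statements are equivalent: (i) every row (a₁,…,a_{n+1}) ∈ I^{n+1} can be I-shortened; (ii) for every I-unimodular row (b, a₁, …, aₙ, d) of length n+2 there exist c₁,…,cₙ ∈ I such that for every b' belonging to the ideal J = I·a₁ + ⋯ + I·aₙ + I·d, the row (b + b', a₁ + c₁d, …, aₙ + cₙd) of length n+1 is I-unimodular. (Lemma on relativization of the absolute stable rank.) -/
open Matrix

/-- `𝔍(a₁,…,aₘ)`, the intersection of all maximal ideals containing the `aᵢ`. -/
noncomputable def JacOf {R : Type*} [CommRing R] {m : ℕ} (a : Fin m → R) : Ideal R :=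
  (Ideal.span (Set.range a)).jacobson

/-- The row `a ∈ I^{n+1}` can be `I`-shortened. -/
def CanIShorten {R : Type*} [CommRing R] (I : Ideal R) {n : ℕ} (a : Fin (n + 1) → R) : Prop :=
  ∃ c : Fin n → R, (∀ i, c i ∈ I) ∧
    JacOf (fun i : Fin n => a i.castSucc + c i * a (Fin.last n)) = JacOf a

/-!
Two rows have the same `𝔍` iff they lie in the same maximal ideals, so shortening `(a, d)` by
`c ∈ Iⁿ` works exactly when every maximal ideal `m` containing `a + c d` also contains `d`.
(i) ⇒ (ii): a maximal ideal containing `(b + b', a + c d)` then contains `a` and `d`, hence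
`b' ∈ J` and `b`, which contradicts the unimodularity of `(b, a, d)`.
(ii) ⇒ (i): apply (ii) to the row `(1, a, d)`. If `d ∉ m`, choose `y` with `y d² ≡ 1 mod m`;
then `b' = -y d² ∈ I J` puts the whole row `(1 + b', a + c d)` into `m`, which is impossible.
-/

section

variable {R : Type*} [CommRing R] {n : ℕ}

def shortenRow (a : Fin (n + 1) → R) (c : Fin n → R) : Fin n → R :=
  fun i => a i.castSucc + c i * a (Fin.last n)

theorem forall_mem_iff_shortenRow (a : Fin (n + 1) → R) (c : Fin n → R) (m : Ideal R) :
    (∀ i, a i ∈ m) ↔ (∀ i, shortenRow a c i ∈ m) ∧ a (Fin.last n) ∈ m := by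
  refine ⟨fun ha => ⟨fun i => m.add_mem (ha _) (m.mul_mem_left _ (ha _)), ha _⟩, ?_⟩
  rintro ⟨hs, hlast⟩ i
  refine Fin.lastCases hlast (fun i => ?_) i
  simpa [shortenRow] using m.sub_mem (hs i) (m.mul_mem_left (c i) hlast)

theorem span_range_le_iff {k : ℕ} (a : Fin k → R) (m : Ideal R) :
    Ideal.span (Set.range a) ≤ m ↔ ∀ i, a i ∈ m :=
  Ideal.span_le.trans Set.range_subset_iff

theorem jacOf_le_iff {k : ℕ} (a : Fin k → R) {m : Ideal R} (hm : m.IsMaximal) :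
    JacOf a ≤ m ↔ ∀ i, a i ∈ m :=
  ⟨fun h => (span_range_le_iff a m).1 (Ideal.le_jacobson.trans h),
    fun h => sInf_le ⟨(span_range_le_iff a m).2 h, hm⟩⟩

theorem jacOf_le_jacOf {k l : ℕ} {a : Fin k → R} {b : Fin l → R}
    (h : ∀ m : Ideal R, m.IsMaximal → (∀ j, b j ∈ m) → ∀ i, a i ∈ m) : JacOf a ≤ JacOf b :=
  le_sInf fun m ⟨hbm, hm⟩ => (jacOf_le_iff a hm).2 (h m hm ((span_range_le_iff b m).1 hbm))

theorem jacOf_eq_jacOf_iff {k l : ℕ} (a : Fin k → R) (b : Fin l → R) :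
    JacOf a = JacOf b ↔ ∀ m : Ideal R, m.IsMaximal → ((∀ i, a i ∈ m) ↔ ∀ j, b j ∈ m) := by
  refine ⟨fun h m hm => ?_, fun h => ?_⟩
  · rw [← jacOf_le_iff a hm, ← jacOf_le_iff b hm, h]
  · exact le_antisymm (jacOf_le_jacOf fun m hm => (h m hm).2)
      (jacOf_le_jacOf fun m hm => (h m hm).1)

theorem canIShorten_iff (I : Ideal R) (a : Fin (n + 1) → R) :
    CanIShorten I a ↔ ∃ c : Fin n → R, (∀ i, c i ∈ I) ∧
      ∀ m : Ideal R, m.IsMaximal → (∀ i, shortenRow a c i ∈ m) → a (Fin.last n) ∈ m := by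
  refine exists_congr fun c => and_congr_right fun _ => ?_
  change JacOf (shortenRow a c) = JacOf a ↔ _
  simp_rw [jacOf_eq_jacOf_iff, forall_mem_iff_shortenRow a c, iff_self_and]

theorem span_insert_range_le_iff (x : R) (v : Fin n → R) (m : Ideal R) :
    Ideal.span (insert x (Set.range v)) ≤ m ↔ x ∈ m ∧ ∀ i, v i ∈ m := by
  rw [Ideal.span_le, Set.insert_subset_iff, Set.range_subset_iff]
  rfl

theorem isIUnimodular_cons_iff (I : Ideal R) (x : R) (v : Fin n → R) :
    IsIUnimodular I (Fin.cons x v : Fin (n + 1) → R) ↔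
      x - 1 ∈ I ∧ (∀ i, v i ∈ I) ∧ Ideal.span (insert x (Set.range v)) = ⊤ := by
  simp [IsIUnimodular, Fin.forall_fin_succ]

theorem isIUnimodular_cons_add_shortenRow {I : Ideal R} {b b' : R} {v : Fin (n + 1) → R}
    {c : Fin n → R} (hw : IsIUnimodular I (Fin.cons b v : Fin (n + 2) → R)) (hc : ∀ i, c i ∈ I)
    (hshort : ∀ m : Ideal R, m.IsMaximal → (∀ i, shortenRow v c i ∈ m) → v (Fin.last n) ∈ m)
    (hb'I : b' ∈ I) (hb'v : b' ∈ Ideal.span (Set.range v)) :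
    IsIUnimodular I (Fin.cons (b + b') (shortenRow v c) : Fin (n + 1) → R) := by
  rw [isIUnimodular_cons_iff] at hw ⊢
  obtain ⟨hb, hv, hspan⟩ := hw
  refine ⟨by simpa [add_sub_right_comm] using I.add_mem hb hb'I,
    fun i => I.add_mem (hv _) (I.mul_mem_right _ (hc i)), ?_⟩
  by_contra hne
  obtain ⟨m, hm, hle⟩ := Ideal.exists_le_maximal _ hne
  obtain ⟨hbb'm, hsm⟩ := (span_insert_range_le_iff _ _ m).1 hle
  have hvm : ∀ i, v i ∈ m := (forall_mem_iff_shortenRow v c m).2 ⟨hsm, hshort m hm hsm⟩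
  have hbm : b ∈ m := by
    simpa using m.sub_mem hbb'm ((span_range_le_iff v m).2 hvm hb'v)
  exact hm.ne_top (eq_top_iff.2 (hspan ▸ (span_insert_range_le_iff b v m).2 ⟨hbm, hvm⟩))

theorem Ideal.IsMaximal.exists_one_add_mem_of_notMem {m I : Ideal R} (hm : m.IsMaximal)
    {d : R} (hdI : d ∈ I) (hdm : d ∉ m) : ∃ b' ∈ I * Ideal.span {d}, 1 + b' ∈ m := by
  obtain ⟨y, i, hi, hyi⟩ := hm.exists_inv (hm.isPrime.mul_notMem hdm hdm)
  refine ⟨-(y * d * d), neg_mem (Ideal.mul_mem_mul (I.mul_mem_left y hdI)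
    (Ideal.mem_span_singleton_self d)), ?_⟩
  convert hi using 1
  linear_combination -hyi

end

theorem relative_asr_unimodular_general {R : Type*} [CommRing R] (I : Ideal R) (n : ℕ) :
    (∀ a : Fin (n + 1) → R, (∀ i, a i ∈ I) → CanIShorten I a) ↔
    (∀ w : Fin (n + 2) → R, IsIUnimodular I w →
      ∃ c : Fin n → R, (∀ i, c i ∈ I) ∧
        ∀ b' ∈ (I * Ideal.span
            (insert (w (Fin.last (n + 1)))
              (Set.range fun i : Fin n => w i.succ.castSucc)) : Ideal R),
          IsIUnimodular I
            (Fin.cons (w 0 + b')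
              (fun i : Fin n => w i.succ.castSucc + c i * w (Fin.last (n + 1)))
              : Fin (n + 1) → R)) := by
  constructor
  · intro h w hw
    obtain ⟨b, v, rfl⟩ : ∃ b v, w = Fin.cons b v := ⟨_, _, (Fin.cons_self_tail w).symm⟩
    obtain ⟨c, hc, hshort⟩ :=
      (canIShorten_iff I v).1 (h v ((isIUnimodular_cons_iff I b v).1 hw).2.1)
    have hJ : Ideal.span (insert (v (Fin.last n)) (Set.range fun i : Fin n => v i.castSucc)) ≤
        Ideal.span (Set.range v) :=
      (span_insert_range_le_iff _ _ _).2
        ⟨Ideal.subset_span ⟨_, rfl⟩, fun _ => Ideal.subset_span ⟨_, rfl⟩⟩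
    exact ⟨c, hc, fun b' hb' => isIUnimodular_cons_add_shortenRow hw hc hshort
      (Ideal.mul_le_left hb') (hJ (Ideal.mul_le_right hb'))⟩
  · intro h a ha
    have hw : IsIUnimodular I (Fin.cons 1 a : Fin (n + 2) → R) :=
      (isIUnimodular_cons_iff I 1 a).2
        ⟨by simp, ha, (Ideal.eq_top_iff_one _).2 (Ideal.subset_span (Set.mem_insert _ _))⟩
    obtain ⟨c, hc, H⟩ := h _ hw
    refine (canIShorten_iff I a).2 ⟨c, hc, fun m hm hs => by_contra fun hd => ?_⟩
    obtain ⟨b', hb', hb'm⟩ := hm.exists_one_add_mem_of_notMem (ha (Fin.last n)) hd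
    have hspan := ((isIUnimodular_cons_iff I _ _).1 (H b' (Ideal.mul_mono_right
      ((Ideal.span_singleton_le_iff_mem _).2 (Ideal.subset_span (Set.mem_insert _ _))) hb'))).2.2
    exact hm.ne_top (eq_top_iff.2 (hspan ▸ (span_insert_range_le_iff _ _ m).2 ⟨hb'm, hs⟩))

/-- Relativization of the absolute stable rank: the `I`-shortening condition is equivalent
to a condition on `I`-unimodular rows. -/
theorem relative_asr_unimodular {R : Type*} [CommRing R] (I : Ideal R) (n : ℕ) (hn : 1 ≤ n) :
    (∀ a : Fin (n + 1) → R, (∀ i, a i ∈ I) → CanIShorten I a) ↔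
    (∀ w : Fin (n + 2) → R, IsIUnimodular I w →
      ∃ c : Fin n → R, (∀ i, c i ∈ I) ∧
        ∀ b' ∈ (I * Ideal.span
            (insert (w (Fin.last (n + 1)))
              (Set.range fun i : Fin n => w i.succ.castSucc)) : Ideal R),
          IsIUnimodular I
            (Fin.cons (w 0 + b')
              (fun i : Fin n => w i.succ.castSucc + c i * w (Fin.last (n + 1)))
              : Fin (n + 1) → R)) :=
  relative_asr_unimodular_general I n
end

section
/- Let R be a commutative ring, I an ideal of R, n ≥ 2, and 1 ≤ k ≤ n−1 such that SR_k(I) holds. Then for every g ∈ SL(n,R) with g ≡ 1ₙ (mod I) there exist an upper unitriangular matrix x with all off-diagonal entries in I and a lower unitriangular matrix y with all off-diagonal entries in I such that the first column w = y·x·g·e₁ of the product satisfies w_j = 0 for all j = k+1, …, n. (Lemma on the action of unipotent radicals, case Φ = A_{n−1}.) -/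
open Matrix

/-!
The first column `a` of `g` is `I`-unimodular, say `∑ rⱼ aⱼ = 1`. Folding its tail into the
single entry `s = ∑_{j ≥ k} rⱼ aⱼ ∈ I` gives the `I`-unimodular row `(a₀, …, a_{k-1}, s)`, which
`SR_k(I)` shortens to a unimodular row `cᵢ = aᵢ + s bᵢ` with `bᵢ ∈ I`. The rank-one update
`x = 1 + b rᵀ` (`b` living on the first `k` rows, `r` on the last `n - k` columns) is upper
unipotent and turns `a` into `w = (c, a_k, …, a_{n-1})`. If `∑ dᵢ cᵢ = 1`, the lower unipotent
`y = 1 - w_{≥k} dᵀ` then sends `w` to `(c, 0, …, 0)`.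
-/

section Unipotent

variable {R : Type*} [CommRing R] {n : ℕ}

def IsUpperUnipotent (I : Ideal R) (x : Matrix (Fin n) (Fin n) R) : Prop :=
  (∀ i, x i i = 1) ∧ (∀ i j : Fin n, j < i → x i j = 0) ∧ (∀ i j : Fin n, i < j → x i j ∈ I)

def IsLowerUnipotent (I : Ideal R) (y : Matrix (Fin n) (Fin n) R) : Prop :=
  (∀ i, y i i = 1) ∧ (∀ i j : Fin n, i < j → y i j = 0) ∧ (∀ i j : Fin n, j < i → y i j ∈ I)

theorem one_add_vecMulVec_mulVec {ι : Type*} [Fintype ι] [DecidableEq ι] (p q a : ι → R) :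
    (1 + vecMulVec p q) *ᵥ a = a + (q ⬝ᵥ a) • p := by
  rw [add_mulVec, one_mulVec, vecMulVec_mulVec, op_smul_eq_smul]

theorem isUpperUnipotent_one_add_vecMulVec {I : Ideal R} {k : ℕ} {p q : Fin n → R}
    (hp : ∀ i : Fin n, k ≤ i → p i = 0) (hq : ∀ j : Fin n, (j : ℕ) < k → q j = 0)
    (hpI : ∀ i, p i ∈ I) : IsUpperUnipotent I (1 + vecMulVec p q) := by
  have hzero : ∀ i j : Fin n, j ≤ i → p i * q j = 0 := fun i j hji => by
    rcases lt_or_ge (i : ℕ) k with hik | hik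
    · rw [hq j (lt_of_le_of_lt hji hik), mul_zero]
    · rw [hp i hik, zero_mul]
  refine ⟨fun i => ?_, fun i j hji => ?_, fun i j hij => ?_⟩ <;>
    simp only [Matrix.add_apply, vecMulVec_apply]
  · rw [one_apply_eq, hzero i i le_rfl, add_zero]
  · rw [one_apply_ne hji.ne', hzero i j hji.le, add_zero]
  · rw [one_apply_ne hij.ne, zero_add]
    exact I.mul_mem_right _ (hpI i)

theorem isLowerUnipotent_one_add_vecMulVec {I : Ideal R} {k : ℕ} {p q : Fin n → R}
    (hp : ∀ i : Fin n, (i : ℕ) < k → p i = 0) (hq : ∀ j : Fin n, k ≤ j → q j = 0)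
    (hpI : ∀ i, p i ∈ I) : IsLowerUnipotent I (1 + vecMulVec p q) := by
  have hzero : ∀ i j : Fin n, i ≤ j → p i * q j = 0 := fun i j hij => by
    rcases lt_or_ge (i : ℕ) k with hik | hik
    · rw [hp i hik, zero_mul]
    · rw [hq j (le_trans hik hij), mul_zero]
  refine ⟨fun i => ?_, fun i j hij => ?_, fun i j hji => ?_⟩ <;>
    simp only [Matrix.add_apply, vecMulVec_apply]
  · rw [one_apply_eq, hzero i i le_rfl, add_zero]
  · rw [one_apply_ne hij.ne, hzero i j hij.le, add_zero]
  · rw [one_apply_ne hji.ne', zero_add]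
    exact I.mul_mem_right _ (hpI i)

theorem exists_dotProduct_eq_one_of_span_image_eq_top {ι : Type*} [Fintype ι] {s : Set ι}
    {w : ι → R} (h : Ideal.span (w '' s) = ⊤) : ∃ d : ι → R, (∀ i ∉ s, d i = 0) ∧ d ⬝ᵥ w = 1 := by
  obtain ⟨l, hl, hlw⟩ :=
    (Finsupp.mem_span_image_iff_linearCombination R).1 (h ▸ Submodule.mem_top : (1 : R) ∈ _)
  refine ⟨l, fun i hi => Finsupp.notMem_support_iff.1 fun hi' => hi (hl hi'), ?_⟩
  rw [← hlw, Finsupp.linearCombination_apply, Finsupp.sum_fintype _ _ (by simp)]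
  rfl

theorem exists_isLowerUnipotent_mulVec_eq_zero {I : Ideal R} {k : ℕ} {w : Fin n → R}
    (hspan : Ideal.span (w '' {i | (i : ℕ) < k}) = ⊤) (hwI : ∀ i : Fin n, k ≤ i → w i ∈ I) :
    ∃ y, IsLowerUnipotent I y ∧ ∀ i : Fin n, k ≤ i → (y *ᵥ w) i = 0 := by
  obtain ⟨d, hd, hdw⟩ := exists_dotProduct_eq_one_of_span_image_eq_top hspan
  set p : Fin n → R := fun i => if k ≤ (i : ℕ) then -w i else 0
  refine ⟨1 + vecMulVec p d, isLowerUnipotent_one_add_vecMulVec (k := k) ?_ ?_ ?_, ?_⟩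
  · intro i hi
    simp [p, not_le.2 hi]
  · intro j hj
    exact hd j (by simpa using hj)
  · intro i
    by_cases hi : k ≤ (i : ℕ)
    · simpa [p, hi] using hwI i hi
    · simp [p, hi]
  · intro i hi
    simp [one_add_vecMulVec_mulVec, hdw, p, hi]

theorem span_range_col_eq_top_of_isUnit_det {m : Type*} [Fintype m] [DecidableEq m]
    {M : Matrix m m R} (hM : IsUnit M.det) (j : m) : Ideal.span (Set.range fun i => M i j) = ⊤ := by
  refine Ideal.eq_top_of_isUnit_mem _ ?_ hM
  have hdet : M.det = ∑ i, adjugate M j i * M i j := by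
    rw [← Matrix.mul_apply, adjugate_mul, Matrix.smul_apply, one_apply_eq, smul_eq_mul, mul_one]
  rw [hdet]
  exact Ideal.sum_mem _ fun i _ => Ideal.mul_mem_left _ _ (Ideal.subset_span ⟨i, rfl⟩)

theorem ModI.isIUnimodular_col {I : Ideal R} {g : Matrix (Fin n) (Fin n) R} (hg : ModI I g)
    (hdet : IsUnit g.det) (hn : 0 < n) : IsIUnimodular I fun i => g i ⟨0, hn⟩ := by
  refine ⟨fun i hi => ?_, fun i hi => ?_, span_range_col_eq_top_of_isUnit_det hdet _⟩
  · obtain rfl : i = ⟨0, hn⟩ := Fin.ext hi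
    have h := hg ⟨0, hn⟩ ⟨0, hn⟩
    rwa [one_apply_eq] at h
  · simpa [one_apply_ne fun h : i = ⟨0, hn⟩ => hi (congrArg Fin.val h)] using hg i ⟨0, hn⟩

theorem IsIUnimodular.exists_snoc_dotProduct {I : Ideal R} {k : ℕ} {a : Fin n → R}
    (ha : IsIUnimodular I a) (hk1 : 1 ≤ k) (hk : k ≤ n) :
    ∃ q : Fin n → R, (∀ j : Fin n, (j : ℕ) < k → q j = 0) ∧
      IsIUnimodular I (Fin.snoc (a ∘ Fin.castLE hk) (q ⬝ᵥ a) : Fin (k + 1) → R) := by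
  obtain ⟨r, hr⟩ :=
    Ideal.mem_span_range_iff_exists_fun.1 (ha.2.2 ▸ Submodule.mem_top : (1 : R) ∈ _)
  set q : Fin n → R := fun j => if k ≤ (j : ℕ) then r j else 0
  have hqa : q ⬝ᵥ a ∈ I := Ideal.sum_mem _ fun j _ => by
    by_cases hj : k ≤ (j : ℕ)
    · exact I.mul_mem_left _ (ha.2.1 j (by omega))
    · simp [q, hj]
  refine ⟨q, fun j hj => by simp [q, not_le.2 hj], fun i hi => ?_, fun i hi => ?_, ?_⟩
  · induction i using Fin.lastCases with
    | last => simp at hi; omega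
    | cast j => simpa using ha.1 _ (by simpa using hi)
  · induction i using Fin.lastCases with
    | last => simpa using hqa
    | cast j => simpa using ha.2.1 _ (by simpa using hi)
  · have hsplit : (1 : R) = ∑ j, (r j - q j) * a j + q ⬝ᵥ a := by
      simp only [dotProduct, sub_mul, Finset.sum_sub_distrib, sub_add_cancel, hr]
    rw [Ideal.eq_top_iff_one, hsplit]
    refine add_mem (Ideal.sum_mem _ fun j _ => ?_) (Ideal.subset_span ⟨Fin.last k, by simp⟩)
    by_cases hj : (j : ℕ) < k
    · refine Ideal.mul_mem_left _ _ (Ideal.subset_span ⟨Fin.castSucc ⟨j, hj⟩, ?_⟩)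
      rw [Fin.snoc_castSucc]
      rfl
    · simp [q, not_lt.1 hj]

theorem exists_isUpperUnipotent_span_mulVec_eq_top {I : Ideal R} {k : ℕ} (hk1 : 1 ≤ k)
    (hk : k ≤ n) (hSR : SRCond k I) {a : Fin n → R} (ha : IsIUnimodular I a) :
    ∃ x, IsUpperUnipotent I x ∧ Ideal.span ((x *ᵥ a) '' {i | (i : ℕ) < k}) = ⊤ ∧
      ∀ i : Fin n, k ≤ i → (x *ᵥ a) i = a i := by
  obtain ⟨q, hq, hsnoc⟩ := ha.exists_snoc_dotProduct hk1 hk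
  obtain ⟨b, hbI, hc⟩ := hSR _ hsnoc
  set p : Fin n → R := fun i => if h : (i : ℕ) < k then b ⟨i, h⟩ else 0
  have hxa : (1 + vecMulVec p q) *ᵥ a = a + (q ⬝ᵥ a) • p := one_add_vecMulVec_mulVec p q a
  refine ⟨1 + vecMulVec p q, isUpperUnipotent_one_add_vecMulVec (k := k) ?_ hq ?_, ?_, ?_⟩
  · intro i hi
    simp [p, not_lt.2 hi]
  · intro i
    by_cases hi : (i : ℕ) < k
    · simpa [p, hi] using hbI _
    · simp [p, hi]
  · refine eq_top_iff.2 (hc.2.2.symm.le.trans (Ideal.span_mono ?_))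
    rintro _ ⟨i, rfl⟩
    refine ⟨Fin.castLE hk i, i.isLt, ?_⟩
    simp [hxa, p, mul_comm]
  · intro i hi
    simp [hxa, p, not_lt.2 hi]

theorem IsIUnimodular.exists_unipotent_mulVec_eq_zero {I : Ideal R} {k : ℕ} (hk1 : 1 ≤ k)
    (hk : k ≤ n) (hSR : SRCond k I) {a : Fin n → R} (ha : IsIUnimodular I a) :
    ∃ x y, IsUpperUnipotent I x ∧ IsLowerUnipotent I y ∧
      ∀ j : Fin n, k ≤ j → ((y * x) *ᵥ a) j = 0 := by
  obtain ⟨x, hx, hspan, hfix⟩ := exists_isUpperUnipotent_span_mulVec_eq_top hk1 hk hSR ha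
  obtain ⟨y, hy, hzero⟩ := exists_isLowerUnipotent_mulVec_eq_zero hspan fun i hi => by
    rw [hfix i hi]
    exact ha.2.1 i (by omega)
  refine ⟨x, y, hx, hy, fun j hj => ?_⟩
  rw [← mulVec_mulVec]
  exact hzero j hj

end Unipotent

/-- Action of unipotent radicals on the first column (case `A_{n−1}`). -/
theorem unipotent_action_SLn {R : Type*} [CommRing R] (I : Ideal R) (n k : ℕ)
    (hk1 : 1 ≤ k) (hk2 : k ≤ n - 1) (hSR : SRCond k I)
    (g : Matrix.SpecialLinearGroup (Fin n) R)
    (hg : ModI I (g : Matrix (Fin n) (Fin n) R)) :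
    ∃ x y : Matrix (Fin n) (Fin n) R,
      -- x upper unitriangular with off-diagonal entries in I
      (∀ i, x i i = 1) ∧ (∀ i j : Fin n, j < i → x i j = 0) ∧
        (∀ i j : Fin n, i < j → x i j ∈ I) ∧
      -- y lower unitriangular with off-diagonal entries in I
      (∀ i, y i i = 1) ∧ (∀ i j : Fin n, i < j → y i j = 0) ∧
        (∀ i j : Fin n, j < i → y i j ∈ I) ∧
      -- the first column of y·x·g vanishes in rows k+1,…,n
      (∀ j : Fin n, k ≤ (j : ℕ) →
        (y * x * (g : Matrix (Fin n) (Fin n) R)) j ⟨0, by omega⟩ = 0) := by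
  have ha := hg.isIUnimodular_col (by rw [g.det_coe]; exact isUnit_one) (by omega)
  obtain ⟨x, y, ⟨hx1, hx0, hxI⟩, ⟨hy1, hy0, hyI⟩, hzero⟩ :=
    ha.exists_unipotent_mulVec_eq_zero hk1 (by omega) hSR
  exact ⟨x, y, hx1, hx0, hxI, hy1, hy0, hyI, hzero⟩
end

section
/- Let R be a commutative ring, I an ideal of R, ℓ ≥ 2, and suppose SR_ℓ(I) holds. Then for every g ∈ Sp(2ℓ,R) with g ≡ 1 (mod I) there exist an upper unitriangular matrix x ∈ Sp(2ℓ,R) with all off-diagonal entries in I and a lower unitriangular matrix y ∈ Sp(2ℓ,R) with all off-diagonal entries in I such that the first column w = y·x·g·e₁ of the product satisfies w_j = 0 for all j = ℓ+1, …, 2ℓ. (Lemma on the action of unipotent radicals, case Φ = C_ℓ.) -/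
open Matrix

/-- The antidiagonal symplectic form. -/
def Jform (R : Type*) [CommRing R] (l : ℕ) : Matrix (Fin (2 * l)) (Fin (2 * l)) R :=
  fun i j => if (j : ℕ) = 2 * l - 1 - (i : ℕ) then (if (i : ℕ) < l then 1 else -1) else 0

namespace UnipSpAux

variable {R : Type*} [CommRing R]

/-- Splitting a sum over `Fin (2*l)` into the first half and the reflected second half. -/
lemma finSumSplit (l : ℕ) (f : Fin (2*l) → R) :
    ∑ i, f i = (∑ a : Fin l, f ⟨a.1, by have := a.isLt; omega⟩)
      + ∑ a : Fin l, f ⟨2*l-1-a.1, by have := a.isLt; omega⟩ := by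
  classical
  set F : ℕ → R := fun i => if h : i < 2*l then f ⟨i, h⟩ else 0 with hF
  have key : ∀ (i : Fin (2*l)), f i = F i.1 := by
    intro i
    simp only [hF]
    rw [dif_pos i.isLt]
  have h1 : ∑ i, f i = ∑ i ∈ Finset.range (2*l), F i := by
    rw [Finset.sum_congr rfl (fun i _ => key i)]
    exact Fin.sum_univ_eq_sum_range F (2*l)
  have h2 : ∑ i ∈ Finset.range (2*l), F i
      = ∑ i ∈ Finset.range l, F i + ∑ i ∈ Finset.Ico l (2*l), F i := by
    rw [Finset.range_eq_Ico, ← Finset.sum_Ico_consecutive F (Nat.zero_le l) (by omega),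
      ← Finset.range_eq_Ico]
  have h3 : ∑ i ∈ Finset.range l, F i = ∑ a : Fin l, f ⟨a.1, by have := a.isLt; omega⟩ := by
    rw [← Fin.sum_univ_eq_sum_range F l]
    refine Finset.sum_congr rfl (fun a _ => ?_)
    simp only [hF]
    rw [dif_pos (by have := a.isLt; omega : (a.1 : ℕ) < 2*l)]
  have h4 : ∑ i ∈ Finset.Ico l (2*l), F i
      = ∑ a : Fin l, f ⟨2*l-1-a.1, by have := a.isLt; omega⟩ := by
    rw [Finset.sum_Ico_eq_sum_range F l (2*l)]
    rw [show 2*l - l = l by omega]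
    rw [← Finset.sum_range_reflect (fun i => F (l + i)) l]
    rw [← Fin.sum_univ_eq_sum_range (fun j => F (l + (l - 1 - j))) l]
    refine Finset.sum_congr rfl (fun a _ => ?_)
    have ha := a.isLt
    have : l + (l - 1 - a.1) = 2*l-1-a.1 := by omega
    rw [this]
    simp only [hF]
    rw [dif_pos (by omega : 2*l-1-a.1 < 2*l)]
  rw [h1, h2, h3, h4]

lemma J_row_sum (l : ℕ) (i : Fin (2*l)) (f : Fin (2*l) → R) :
    ∑ k, Jform R l i k * f k
      = (if (i:ℕ) < l then (1:R) else -1) * f ⟨2*l-1-(i:ℕ), by have := i.isLt; omega⟩ := by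
  rw [Finset.sum_eq_single (⟨2*l-1-(i:ℕ), by have := i.isLt; omega⟩ : Fin (2*l))]
  · simp only [Jform]
    simp
  · intro k _ hk
    have hne : ¬ ((k:ℕ) = 2*l-1-(i:ℕ)) := by
      intro h
      exact hk (Fin.ext (show (k:ℕ) = 2*l-1-(i:ℕ) from h))
    simp only [Jform]
    rw [if_neg hne, zero_mul]
  · intro h; exact absurd (Finset.mem_univ _) h

lemma J_col_sum (l : ℕ) (j : Fin (2*l)) (f : Fin (2*l) → R) :
    ∑ k, f k * Jform R l k j
      = f ⟨2*l-1-(j:ℕ), by have := j.isLt; omega⟩ * (if 2*l-1-(j:ℕ) < l then (1:R) else -1) := by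
  rw [Finset.sum_eq_single (⟨2*l-1-(j:ℕ), by have := j.isLt; omega⟩ : Fin (2*l))]
  · simp only [Jform]
    rw [if_pos (by have := j.isLt; omega : (j:ℕ) = 2*l-1-(2*l-1-(j:ℕ)))]
  · intro k _ hk
    have hne : ¬ ((j:ℕ) = 2*l-1-(k:ℕ)) := by
      intro h
      have h1 := j.isLt; have h2 := k.isLt
      exact hk (Fin.ext (show (k:ℕ) = 2*l-1-(j:ℕ) by omega))
    simp only [Jform]
    rw [if_neg hne, mul_zero]
  · intro h; exact absurd (Finset.mem_univ _) h

lemma J_mul_J (l : ℕ) : Jform R l * Jform R l = (-1 : Matrix (Fin (2*l)) (Fin (2*l)) R) := by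
  ext i j
  rw [Matrix.mul_apply, J_row_sum l i (fun k => Jform R l k j)]
  have hi := i.isLt
  have hj := j.isLt
  simp only [Jform]
  rw [show (2*l-1-(2*l-1-(i:ℕ))) = (i:ℕ) by omega]
  by_cases hij : (j:ℕ) = (i:ℕ)
  · rw [if_pos hij]
    have : j = i := Fin.ext hij
    subst this
    rw [Matrix.neg_apply, Matrix.one_apply_eq]
    by_cases h : (j:ℕ) < l
    · rw [if_pos h, if_neg (by omega : ¬ (2*l-1-(j:ℕ) < l))]; ring
    · rw [if_neg h, if_pos (by omega : 2*l-1-(j:ℕ) < l)]; ring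
  · rw [if_neg hij, Matrix.neg_apply, Matrix.one_apply_ne (by
      intro h; exact hij (by rw [h])), mul_zero, neg_zero]

/-- Upper-right block unipotent part. -/
def NU (l : ℕ) (m : Fin l → Fin l → R) : Matrix (Fin (2*l)) (Fin (2*l)) R :=
  fun a b => if h : (a:ℕ) < l ∧ l ≤ (b:ℕ) then
      m ⟨a.1, h.1⟩ ⟨2*l-1-b.1, by have := b.isLt; omega⟩ else 0

/-- Lower-left block unipotent part. -/
def NL (l : ℕ) (c : Fin l → Fin l → R) : Matrix (Fin (2*l)) (Fin (2*l)) R :=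
  fun a b => if h : l ≤ (a:ℕ) ∧ (b:ℕ) < l then
      c ⟨2*l-1-a.1, by have := a.isLt; omega⟩ ⟨b.1, h.2⟩ else 0

variable {l : ℕ} {m c : Fin l → Fin l → R}

lemma NU_zero_left {a b : Fin (2*l)} (h : l ≤ (a:ℕ)) : NU l m a b = 0 :=
  dif_neg (by omega)

lemma NU_zero_right {a b : Fin (2*l)} (h : (b:ℕ) < l) : NU l m a b = 0 :=
  dif_neg (by omega)

lemma NU_apply {a b : Fin (2*l)} (h1 : (a:ℕ) < l) (h2 : l ≤ (b:ℕ)) :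
    NU l m a b = m ⟨a.1, h1⟩ ⟨2*l-1-b.1, by have := b.isLt; omega⟩ :=
  dif_pos ⟨h1, h2⟩

lemma NL_zero_left {a b : Fin (2*l)} (h : (a:ℕ) < l) : NL l c a b = 0 :=
  dif_neg (by omega)

lemma NL_zero_right {a b : Fin (2*l)} (h : l ≤ (b:ℕ)) : NL l c a b = 0 :=
  dif_neg (by omega)

lemma NL_apply {a b : Fin (2*l)} (h1 : l ≤ (a:ℕ)) (h2 : (b:ℕ) < l) :
    NL l c a b = c ⟨2*l-1-a.1, by have := a.isLt; omega⟩ ⟨b.1, h2⟩ :=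
  dif_pos ⟨h1, h2⟩

set_option maxHeartbeats 1000000 in
lemma NU_sympl (hm : ∀ i j, m i j = m j i) :
    (1 + NU l m)ᵀ * Jform R l * (1 + NU l m) = Jform R l := by
  have hA : Jform R l * NU l m + (NU l m)ᵀ * Jform R l = 0 := by
    ext i j
    have hi2 := i.isLt
    have hj2 := j.isLt
    simp only [Matrix.add_apply, Matrix.mul_apply, Matrix.transpose_apply, Matrix.zero_apply]
    rw [J_row_sum l i (fun k => NU l m k j), J_col_sum l j (fun k => NU l m k i)]
    by_cases hi : (i:ℕ) < l <;> by_cases hj : (j:ℕ) < l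
    · rw [NU_zero_left (show l ≤ 2*l-1-(i:ℕ) by omega),
        NU_zero_left (show l ≤ 2*l-1-(j:ℕ) by omega)]
      ring
    · rw [NU_zero_left (show l ≤ 2*l-1-(i:ℕ) by omega), NU_zero_right hi]
      ring
    · rw [NU_zero_right hj, NU_zero_left (show l ≤ 2*l-1-(j:ℕ) by omega)]
      ring
    · rw [NU_apply (show 2*l-1-(i:ℕ) < l by omega) (show l ≤ (j:ℕ) by omega),
        NU_apply (show 2*l-1-(j:ℕ) < l by omega) (show l ≤ (i:ℕ) by omega)]
      rw [if_neg hi, if_pos (show 2*l-1-(j:ℕ) < l by omega)]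
      rw [hm ⟨2*l-1-(i:ℕ), by omega⟩ ⟨2*l-1-(j:ℕ), by omega⟩]
      ring
  have hB : (NU l m)ᵀ * Jform R l * NU l m = 0 := by
    rw [Matrix.mul_assoc]
    ext i j
    rw [Matrix.mul_apply, Matrix.zero_apply]
    refine Finset.sum_eq_zero (fun k _ => ?_)
    rw [Matrix.transpose_apply, Matrix.mul_apply, J_row_sum l k (fun k' => NU l m k' j)]
    by_cases hk : (k:ℕ) < l
    · have h2 : NU l m (⟨2*l-1-(k:ℕ), by have := k.isLt; omega⟩ : Fin (2*l)) j = 0 :=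
        NU_zero_left (by simp only []; omega)
      rw [h2]
      ring
    · have h2 : NU l m k i = 0 := NU_zero_left (by omega)
      rw [h2]
      ring
  have expand : (1 + NU l m)ᵀ * Jform R l * (1 + NU l m)
      = Jform R l + (Jform R l * NU l m + (NU l m)ᵀ * Jform R l)
        + (NU l m)ᵀ * Jform R l * NU l m := by
    rw [Matrix.transpose_add, Matrix.transpose_one]
    noncomm_ring
  rw [expand, hA, hB, add_zero, add_zero]

set_option maxHeartbeats 1000000 in
lemma NL_sympl (hc : ∀ i j, c i j = c j i) :
    (1 + NL l c)ᵀ * Jform R l * (1 + NL l c) = Jform R l := by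
  have hA : Jform R l * NL l c + (NL l c)ᵀ * Jform R l = 0 := by
    ext i j
    have hi2 := i.isLt
    have hj2 := j.isLt
    simp only [Matrix.add_apply, Matrix.mul_apply, Matrix.transpose_apply, Matrix.zero_apply]
    rw [J_row_sum l i (fun k => NL l c k j), J_col_sum l j (fun k => NL l c k i)]
    by_cases hi : (i:ℕ) < l <;> by_cases hj : (j:ℕ) < l
    · rw [NL_apply (show l ≤ 2*l-1-(i:ℕ) by omega) hj,
        NL_apply (show l ≤ 2*l-1-(j:ℕ) by omega) hi]
      rw [if_pos hi, if_neg (show ¬ (2*l-1-(j:ℕ) < l) by omega)]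
      have e1 : (⟨2*l-1-(2*l-1-(i:ℕ)), by omega⟩ : Fin l) = ⟨(i:ℕ), hi⟩ :=
        Fin.ext (show 2*l-1-(2*l-1-(i:ℕ)) = (i:ℕ) by omega)
      have e2 : (⟨2*l-1-(2*l-1-(j:ℕ)), by omega⟩ : Fin l) = ⟨(j:ℕ), hj⟩ :=
        Fin.ext (show 2*l-1-(2*l-1-(j:ℕ)) = (j:ℕ) by omega)
      rw [e1, e2, hc ⟨(i:ℕ), hi⟩ ⟨(j:ℕ), hj⟩]
      ring
    · rw [NL_zero_right (show l ≤ (j:ℕ) by omega),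
        NL_zero_left (show 2*l-1-(j:ℕ) < l by omega)]
      ring
    · rw [NL_zero_left (show 2*l-1-(i:ℕ) < l by omega),
        NL_zero_right (show l ≤ (i:ℕ) by omega)]
      ring
    · rw [NL_zero_left (show 2*l-1-(i:ℕ) < l by omega),
        NL_zero_left (show 2*l-1-(j:ℕ) < l by omega)]
      ring
  have hB : (NL l c)ᵀ * Jform R l * NL l c = 0 := by
    rw [Matrix.mul_assoc]
    ext i j
    rw [Matrix.mul_apply, Matrix.zero_apply]
    refine Finset.sum_eq_zero (fun k _ => ?_)
    rw [Matrix.transpose_apply, Matrix.mul_apply, J_row_sum l k (fun k' => NL l c k' j)]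
    by_cases hk : (k:ℕ) < l
    · have h2 : NL l c k i = 0 := NL_zero_left hk
      rw [h2]
      ring
    · have h2 : NL l c (⟨2*l-1-(k:ℕ), by have := k.isLt; omega⟩ : Fin (2*l)) j = 0 :=
        NL_zero_left (by simp only []; omega)
      rw [h2]
      ring
  have expand : (1 + NL l c)ᵀ * Jform R l * (1 + NL l c)
      = Jform R l + (Jform R l * NL l c + (NL l c)ᵀ * Jform R l)
        + (NL l c)ᵀ * Jform R l * NL l c := by
    rw [Matrix.transpose_add, Matrix.transpose_one]
    noncomm_ring
  rw [expand, hA, hB, add_zero, add_zero]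

/-- The core construction: from one application of `SR_l(I)` to the row `(p, t²)`,
produce symmetric matrices `m`, `c` over `I` with `m·q = u - p`, `c·u = -q`. -/
lemma core (I : Ideal R) (l : ℕ) (h0l : 0 < l) (hSR : SRCond l I)
    (p q : Fin l → R)
    (hp0 : p ⟨0, h0l⟩ - 1 ∈ I) (hpI : ∀ a : Fin l, (a:ℕ) ≠ 0 → p a ∈ I)
    (hqI : ∀ a : Fin l, q a ∈ I)
    (w1 w2 : Fin l → R)
    (hone : (∑ a : Fin l, w1 a * p a) + (∑ a : Fin l, w2 a * q a) = 1) :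
    ∃ (m c : Fin l → Fin l → R) (u : Fin l → R),
      (∀ i j, m i j = m j i) ∧ (∀ i j, m i j ∈ I) ∧
      (∀ i j, c i j = c j i) ∧ (∀ i j, c i j ∈ I) ∧
      (∀ i, (∑ a : Fin l, m i a * q a) = u i - p i) ∧
      (∀ k, (∑ a : Fin l, c k a * u a) = - q k) := by
  classical
  set t : R := ∑ a : Fin l, w2 a * q a with hts
  have htI : t ∈ I := Ideal.sum_mem I (fun a _ => Ideal.mul_mem_left I _ (hqI a))
  -- the SR row
  set arow : Fin (l+1) → R := fun i => if h : (i:ℕ) < l then p ⟨(i:ℕ), h⟩ else t^2 with harow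
  have hmem1 : ∀ a : Fin l, p a ∈ Ideal.span (Set.range arow) := by
    intro a
    have he : arow ⟨a.1, by have := a.isLt; omega⟩ = p a := by
      rw [harow]
      simp only []
      rw [dif_pos (show ((⟨a.1, by have := a.isLt; omega⟩ : Fin (l+1)):ℕ) < l from a.isLt)]
    exact he ▸ Ideal.subset_span ⟨⟨a.1, by have := a.isLt; omega⟩, rfl⟩
  have hmem2 : t^2 ∈ Ideal.span (Set.range arow) := by
    have he : arow ⟨l, by omega⟩ = t^2 := by
      rw [harow]
      simp only []
      rw [dif_neg (show ¬ ((⟨l, by omega⟩ : Fin (l+1)):ℕ) < l from by simp)]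
    exact he ▸ Ideal.subset_span ⟨⟨l, by omega⟩, rfl⟩
  have hrow : IsIUnimodular I arow := by
    refine ⟨?_, ?_, ?_⟩
    · intro i hi0
      have hi : (i:ℕ) < l := by omega
      rw [harow]
      simp only []
      rw [dif_pos hi]
      have he : (⟨(i:ℕ), hi⟩ : Fin l) = ⟨0, h0l⟩ := Fin.ext (by simpa using hi0)
      rw [he]
      exact hp0
    · intro i hi0
      rw [harow]
      simp only []
      by_cases hi : (i:ℕ) < l
      · rw [dif_pos hi]
        exact hpI _ (by simpa using hi0)
      · rw [dif_neg hi, sq]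
        exact Ideal.mul_mem_left I t htI
    · rw [Ideal.eq_top_iff_one]
      have h1t : (1:R) - t ∈ Ideal.span (Set.range arow) := by
        have he : (1:R) - t = ∑ a : Fin l, w1 a * p a := by
          rw [eq_sub_of_add_eq hone]
        rw [he]
        exact Ideal.sum_mem _ (fun a _ => Ideal.mul_mem_left _ _ (hmem1 a))
      have hfact : (1:R) = (1+t)*(1-t) + t^2 := by ring
      rw [hfact]
      exact Ideal.add_mem _ (Ideal.mul_mem_left _ _ h1t) hmem2
  obtain ⟨b, hbI, hbu⟩ := hSR arow hrow
  have hcs : ∀ i : Fin l, arow i.castSucc = p i := by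
    intro i
    have hci : ((i.castSucc : Fin (l+1)) : ℕ) < l := by simpa using i.isLt
    rw [harow]
    simp only []
    rw [dif_pos hci]
    have he2 : (⟨((i.castSucc : Fin (l+1)) : ℕ), hci⟩ : Fin l) = i := Fin.ext (by simp)
    rw [he2]
  have hlast : arow (Fin.last l) = t^2 := by
    rw [harow]
    simp only []
    rw [dif_neg (by simp)]
  have hspan : Ideal.span (Set.range (fun i : Fin l => p i + t^2 * b i)) = ⊤ := by
    have h := hbu.2.2
    have heq : (fun i : Fin l => arow i.castSucc + arow (Fin.last l) * b i)
        = (fun i : Fin l => p i + t^2 * b i) := by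
      funext i
      rw [hcs i, hlast]
    rwa [heq] at h
  -- extract a witness
  have h1u : (1:R) ∈ Ideal.span (Set.range (fun i : Fin l => p i + t^2 * b i)) := by
    rw [hspan]; trivial
  rw [Ideal.span, Submodule.mem_span_range_iff_exists_fun] at h1u
  obtain ⟨w, hw0⟩ := h1u
  set u : Fin l → R := fun i => p i + t^2 * b i with hu
  have hw : ∑ a : Fin l, w a * u a = 1 := by simpa only [smul_eq_mul] using hw0
  set s : R := ∑ a : Fin l, b a * q a with hss
  have hsI : s ∈ I := Ideal.sum_mem I (fun a _ => Ideal.mul_mem_right _ I (hbI a))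
  set τ : R := ∑ a : Fin l, q a * u a with hτ
  have hτI : τ ∈ I := Ideal.sum_mem I (fun a _ => Ideal.mul_mem_right _ I (hqI a))
  refine ⟨fun i j => t*(b i * w2 j + w2 i * b j) - s*(w2 i * w2 j),
    fun k j => -(q k * w j + w k * q j) + τ*(w k * w j),
    u, ?_, ?_, ?_, ?_, ?_, ?_⟩
  · intro i j; ring
  · intro i j
    exact Ideal.sub_mem I (Ideal.mul_mem_right _ I htI) (Ideal.mul_mem_right _ I hsI)
  · intro i j; ring
  · intro k j
    refine Ideal.add_mem I (neg_mem (Ideal.add_mem I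
      (Ideal.mul_mem_right _ I (hqI k)) (Ideal.mul_mem_left I _ (hqI j))))
      (Ideal.mul_mem_right _ I hτI)
  · intro i
    have hcalc : ∑ a : Fin l, (t*(b i * w2 a + w2 i * b a) - s*(w2 i * w2 a)) * q a
        = ∑ a : Fin l, ((t * b i)*(w2 a * q a) + (t * w2 i)*(b a * q a)
            - (s * w2 i)*(w2 a * q a)) :=
      Finset.sum_congr rfl (fun a _ => by ring)
    rw [hcalc, Finset.sum_sub_distrib, Finset.sum_add_distrib,
      ← Finset.mul_sum, ← Finset.mul_sum, ← Finset.mul_sum, ← hts, ← hss]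
    have hui : u i = p i + t^2 * b i := rfl
    rw [hui]
    ring
  · intro k
    have hcalc : ∑ a : Fin l, (-(q k * w a + w k * q a) + τ*(w k * w a)) * u a
        = ∑ a : Fin l, ((τ * w k)*(w a * u a) - ((q k)*(w a * u a) + (w k)*(q a * u a))) :=
      Finset.sum_congr rfl (fun a _ => by ring)
    rw [hcalc, Finset.sum_sub_distrib, Finset.sum_add_distrib,
      ← Finset.mul_sum, ← Finset.mul_sum, ← Finset.mul_sum, ← hτ, hw]
    ring


end UnipSpAux

set_option maxHeartbeats 1000000 in
/-- Action of unipotent radicals on the first column (case `C_ℓ`). -/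
theorem unipotent_action_Sp {R : Type*} [CommRing R] (I : Ideal R) (l : ℕ)
    (hl : 2 ≤ l) (hSR : SRCond l I)
    (g : Matrix (Fin (2 * l)) (Fin (2 * l)) R)
    (hgSp : gᵀ * Jform R l * g = Jform R l) (hg : ModI I g) :
    ∃ x y : Matrix (Fin (2 * l)) (Fin (2 * l)) R,
      xᵀ * Jform R l * x = Jform R l ∧
      yᵀ * Jform R l * y = Jform R l ∧
      -- x upper unitriangular with off-diagonal entries in I
      (∀ i, x i i = 1) ∧ (∀ i j : Fin (2 * l), j < i → x i j = 0) ∧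
        (∀ i j : Fin (2 * l), i < j → x i j ∈ I) ∧
      -- y lower unitriangular with off-diagonal entries in I
      (∀ i, y i i = 1) ∧ (∀ i j : Fin (2 * l), i < j → y i j = 0) ∧
        (∀ i j : Fin (2 * l), j < i → y i j ∈ I) ∧
      -- the first column of y·x·g vanishes in rows ℓ+1,…,2ℓ
      (∀ j : Fin (2 * l), l ≤ (j : ℕ) → (y * x * g) j ⟨0, by omega⟩ = 0) := by
  classical
  have h0l : 0 < l := by omega
  have hn0 : 0 < 2*l := by omega
  -- the inverse of g
  have hJJ := UnipSpAux.J_mul_J (R := R) l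
  have hinv : (-(Jform R l * gᵀ * Jform R l)) * g = 1 := by
    rw [Matrix.neg_mul]
    have h1 : Jform R l * gᵀ * Jform R l * g = Jform R l * (gᵀ * Jform R l * g) := by
      rw [Matrix.mul_assoc (Jform R l) gᵀ (Jform R l), Matrix.mul_assoc]
    rw [h1, hgSp, hJJ, neg_neg]
  have hone0 : ∑ i, (-(Jform R l * gᵀ * Jform R l)) ⟨0, hn0⟩ i * g i ⟨0, hn0⟩ = 1 := by
    have h2 := congrArg (fun M : Matrix (Fin (2*l)) (Fin (2*l)) R => M ⟨0, hn0⟩ ⟨0, hn0⟩) hinv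
    simp only [Matrix.mul_apply] at h2
    rw [h2, Matrix.one_apply_eq]
  have hone : (∑ a : Fin l,
        (fun a : Fin l => (-(Jform R l * gᵀ * Jform R l)) ⟨0, hn0⟩ ⟨a.1, by have := a.isLt; omega⟩) a
        * (fun a : Fin l => g ⟨a.1, by have := a.isLt; omega⟩ ⟨0, hn0⟩) a)
      + (∑ a : Fin l,
        (fun a : Fin l => (-(Jform R l * gᵀ * Jform R l)) ⟨0, hn0⟩ ⟨2*l-1-a.1, by have := a.isLt; omega⟩) a
        * (fun a : Fin l => g ⟨2*l-1-a.1, by have := a.isLt; omega⟩ ⟨0, hn0⟩) a) = 1 := by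
    rw [← UnipSpAux.finSumSplit l
      (fun i => (-(Jform R l * gᵀ * Jform R l)) ⟨0, hn0⟩ i * g i ⟨0, hn0⟩)]
    exact hone0
  -- membership facts
  have hp0 : (fun a : Fin l => g ⟨a.1, by have := a.isLt; omega⟩ ⟨0, hn0⟩) ⟨0, h0l⟩ - 1 ∈ I := by
    have h := hg ⟨0, hn0⟩ ⟨0, hn0⟩
    rw [Matrix.one_apply_eq] at h
    exact h
  have hpI : ∀ a : Fin l, (a:ℕ) ≠ 0 →
      (fun a : Fin l => g ⟨a.1, by have := a.isLt; omega⟩ ⟨0, hn0⟩) a ∈ I := by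
    intro a ha
    have h := hg ⟨a.1, by have := a.isLt; omega⟩ ⟨0, hn0⟩
    rw [Matrix.one_apply_ne (by
      intro hcon
      exact ha (congrArg Fin.val hcon))] at h
    simpa using h
  have hqI : ∀ a : Fin l,
      (fun a : Fin l => g ⟨2*l-1-a.1, by have := a.isLt; omega⟩ ⟨0, hn0⟩) a ∈ I := by
    intro a
    have h := hg ⟨2*l-1-a.1, by have := a.isLt; omega⟩ ⟨0, hn0⟩
    rw [Matrix.one_apply_ne (by
      intro hcon
      have := congrArg Fin.val hcon
      have ha := a.isLt
      simp only [] at this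
      omega)] at h
    simpa using h
  obtain ⟨m, c, u, hmSym, hmI, hcSym, hcI, hMq, hCu⟩ :=
    UnipSpAux.core I l h0l hSR
      (fun a : Fin l => g ⟨a.1, by have := a.isLt; omega⟩ ⟨0, hn0⟩)
      (fun a : Fin l => g ⟨2*l-1-a.1, by have := a.isLt; omega⟩ ⟨0, hn0⟩)
      hp0 hpI hqI
      (fun a : Fin l => (-(Jform R l * gᵀ * Jform R l)) ⟨0, hn0⟩ ⟨a.1, by have := a.isLt; omega⟩)
      (fun a : Fin l => (-(Jform R l * gᵀ * Jform R l)) ⟨0, hn0⟩ ⟨2*l-1-a.1, by have := a.isLt; omega⟩)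
      hone
  -- the column of x * g
  have hG1 : ∀ (k : Fin (2*l)) (hk : (k:ℕ) < l),
      ((1 + UnipSpAux.NU l m) * g) k ⟨0, hn0⟩ = u ⟨k.1, hk⟩ := by
    intro k hk
    rw [Matrix.add_mul, Matrix.one_mul, Matrix.add_apply, Matrix.mul_apply]
    rw [UnipSpAux.finSumSplit l (fun i => UnipSpAux.NU l m k i * g i ⟨0, hn0⟩)]
    have e1 : (∑ a : Fin l,
        (fun i => UnipSpAux.NU l m k i * g i ⟨0, hn0⟩) ⟨a.1, by have := a.isLt; omega⟩) = 0 := by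
      refine Finset.sum_eq_zero (fun a _ => ?_)
      simp only []
      rw [UnipSpAux.NU_zero_right (show ((⟨a.1, by have := a.isLt; omega⟩ : Fin (2*l)):ℕ) < l
        from a.isLt), zero_mul]
    have e2 : (∑ a : Fin l,
        (fun i => UnipSpAux.NU l m k i * g i ⟨0, hn0⟩) ⟨2*l-1-a.1, by have := a.isLt; omega⟩)
        = ∑ a : Fin l, m ⟨k.1, hk⟩ a
            * (fun a : Fin l => g ⟨2*l-1-a.1, by have := a.isLt; omega⟩ ⟨0, hn0⟩) a := by
      refine Finset.sum_congr rfl (fun a _ => ?_)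
      simp only []
      rw [UnipSpAux.NU_apply hk (show l ≤ ((⟨2*l-1-a.1, by have := a.isLt; omega⟩ : Fin (2*l)):ℕ)
        from by have := a.isLt; simp only []; omega)]
      congr 2
      exact Fin.ext (by have := a.isLt; simp only []; omega)
    rw [e1, e2, hMq ⟨k.1, hk⟩]
    have hpk : g k ⟨0, hn0⟩
        = (fun a : Fin l => g ⟨a.1, by have := a.isLt; omega⟩ ⟨0, hn0⟩) ⟨k.1, hk⟩ := rfl
    rw [hpk]
    ring
  have hG2 : ∀ (k : Fin (2*l)), l ≤ (k:ℕ) →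
      ((1 + UnipSpAux.NU l m) * g) k ⟨0, hn0⟩ = g k ⟨0, hn0⟩ := by
    intro k hk
    rw [Matrix.add_mul, Matrix.one_mul, Matrix.add_apply, Matrix.mul_apply]
    have e : (∑ i, UnipSpAux.NU l m k i * g i ⟨0, hn0⟩) = 0 :=
      Finset.sum_eq_zero (fun i _ => by rw [UnipSpAux.NU_zero_left hk, zero_mul])
    rw [e, add_zero]
  refine ⟨1 + UnipSpAux.NU l m, 1 + UnipSpAux.NL l c,
    UnipSpAux.NU_sympl hmSym, UnipSpAux.NL_sympl hcSym, ?_, ?_, ?_, ?_, ?_, ?_, ?_⟩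
  · intro i
    rw [Matrix.add_apply, Matrix.one_apply_eq,
      show UnipSpAux.NU l m i i = 0 from dif_neg (by omega), add_zero]
  · intro i j hij
    rw [Fin.lt_def] at hij
    rw [Matrix.add_apply, Matrix.one_apply_ne (by
      intro hcon
      rw [hcon] at hij
      exact lt_irrefl _ hij),
      show UnipSpAux.NU l m i j = 0 from dif_neg (by omega), add_zero]
  · intro i j hij
    rw [Fin.lt_def] at hij
    rw [Matrix.add_apply, Matrix.one_apply_ne (by
      intro hcon
      rw [hcon] at hij
      exact lt_irrefl _ hij), zero_add]
    by_cases hc2 : (i:ℕ) < l ∧ l ≤ (j:ℕ)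
    · rw [UnipSpAux.NU_apply hc2.1 hc2.2]
      exact hmI _ _
    · rw [show UnipSpAux.NU l m i j = 0 from dif_neg hc2]
      exact Ideal.zero_mem I
  · intro i
    rw [Matrix.add_apply, Matrix.one_apply_eq,
      show UnipSpAux.NL l c i i = 0 from dif_neg (by omega), add_zero]
  · intro i j hij
    rw [Fin.lt_def] at hij
    rw [Matrix.add_apply, Matrix.one_apply_ne (by
      intro hcon
      rw [hcon] at hij
      exact lt_irrefl _ hij),
      show UnipSpAux.NL l c i j = 0 from dif_neg (by omega), add_zero]
  · intro i j hij
    rw [Fin.lt_def] at hij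
    rw [Matrix.add_apply, Matrix.one_apply_ne (by
      intro hcon
      rw [hcon] at hij
      exact lt_irrefl _ hij), zero_add]
    by_cases hc2 : l ≤ (i:ℕ) ∧ (j:ℕ) < l
    · rw [UnipSpAux.NL_apply hc2.1 hc2.2]
      exact hcI _ _
    · rw [show UnipSpAux.NL l c i j = 0 from dif_neg hc2]
      exact Ideal.zero_mem I
  · intro j hj
    show ((1 + UnipSpAux.NL l c) * (1 + UnipSpAux.NU l m) * g) j ⟨0, hn0⟩ = 0
    rw [Matrix.mul_assoc, Matrix.add_mul, Matrix.one_mul, Matrix.add_apply, hG2 j hj,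
      Matrix.mul_apply]
    rw [UnipSpAux.finSumSplit l
      (fun k => UnipSpAux.NL l c j k * ((1 + UnipSpAux.NU l m) * g) k ⟨0, hn0⟩)]
    have hjlt := j.isLt
    have e2 : (∑ a : Fin l, (fun k => UnipSpAux.NL l c j k
        * ((1 + UnipSpAux.NU l m) * g) k ⟨0, hn0⟩) ⟨2*l-1-a.1, by have := a.isLt; omega⟩) = 0 := by
      refine Finset.sum_eq_zero (fun a _ => ?_)
      simp only []
      rw [UnipSpAux.NL_zero_right (show l ≤ ((⟨2*l-1-a.1, by have := a.isLt; omega⟩ : Fin (2*l)):ℕ)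
        from by have := a.isLt; simp only []; omega), zero_mul]
    have e1 : (∑ a : Fin l, (fun k => UnipSpAux.NL l c j k
        * ((1 + UnipSpAux.NU l m) * g) k ⟨0, hn0⟩) ⟨a.1, by have := a.isLt; omega⟩)
        = ∑ a : Fin l, c ⟨2*l-1-(j:ℕ), by omega⟩ a * u a := by
      refine Finset.sum_congr rfl (fun a _ => ?_)
      simp only []
      rw [UnipSpAux.NL_apply hj (show ((⟨a.1, by have := a.isLt; omega⟩ : Fin (2*l)):ℕ) < l
        from a.isLt)]
      rw [hG1 ⟨a.1, by have := a.isLt; omega⟩ a.isLt]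
    rw [e1, e2, hCu ⟨2*l-1-(j:ℕ), by omega⟩, add_zero]
    have hidx : (⟨2*l-1-((⟨2*l-1-(j:ℕ), by omega⟩ : Fin l) : ℕ),
        by exact (by omega : 2*l-1-(2*l-1-(j:ℕ)) < 2*l)⟩ : Fin (2*l)) = j :=
      Fin.ext (show 2*l-1-(2*l-1-(j:ℕ)) = (j:ℕ) by omega)
    rw [hidx]
    ring
end

section
/- Let R be a commutative ring, I an ideal of R, and n ≥ 2. If g ∈ SL(n,R) satisfies g ≡ 1ₙ (mod I) and g₁₁ = 1, then g = v · h · u, where: v is lower unitriangular whose off-diagonal entries are zero except possibly in the first column, those entries lying in I; h ≡ 1ₙ (mod I) has first row and first column equal to those of the identity matrix (so its lower-right (n−1)×(n−1) block lies in SL(n−1,R) and is ≡ 1 (mod I)); and u is upper unitriangular whose off-diagonal entries are zero except possibly in the first row, those entries lying in I. (Relative Chevalley–Matsumoto decomposition, case Φ = A_{n−1} with the natural representation.) -/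
open Matrix

/-- Relative Chevalley–Matsumoto decomposition, case `A_{n−1}`. -/
theorem relative_chevalley_matsumoto {R : Type*} [CommRing R] (I : Ideal R) (n : ℕ)
    (hn : 2 ≤ n) (g : Matrix.SpecialLinearGroup (Fin n) R)
    (hg : ModI I (g : Matrix (Fin n) (Fin n) R))
    (hg11 : (g : Matrix (Fin n) (Fin n) R) ⟨0, by omega⟩ ⟨0, by omega⟩ = 1) :
    ∃ v h u : Matrix (Fin n) (Fin n) R,
      (g : Matrix (Fin n) (Fin n) R) = v * h * u ∧
      -- v lower unitriangular, zero off the diagonal except in the first column,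
      -- those entries lying in I
      (∀ i, v i i = 1) ∧
      (∀ i : Fin n, i ≠ ⟨0, by omega⟩ → v i ⟨0, by omega⟩ ∈ I) ∧
      (∀ i j : Fin n, i ≠ j → j ≠ ⟨0, by omega⟩ → v i j = 0) ∧
      -- h has first row and column of the identity and h ≡ 1 mod I
      (∀ j : Fin n, h (⟨0, by omega⟩ : Fin n) j = (1 : Matrix (Fin n) (Fin n) R) ⟨0, by omega⟩ j) ∧
      (∀ i : Fin n, h i ⟨0, by omega⟩ = (1 : Matrix (Fin n) (Fin n) R) i ⟨0, by omega⟩) ∧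
      ModI I h ∧
      -- u upper unitriangular, zero off the diagonal except in the first row,
      -- those entries lying in I
      (∀ i, u i i = 1) ∧
      (∀ j : Fin n, j ≠ ⟨0, by omega⟩ → u (⟨0, by omega⟩ : Fin n) j ∈ I) ∧
      (∀ i j : Fin n, i ≠ j → i ≠ ⟨0, by omega⟩ → u i j = 0) := by
  set G : Matrix (Fin n) (Fin n) R := (g : Matrix (Fin n) (Fin n) R) with hG
  set z : Fin n := ⟨0, by omega⟩ with hz
  set w : Fin n → R := fun i => if i = z then 0 else G i z with hw
  set r' : Fin n → R := fun j => if j = z then 0 else G z j with hr'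
  set c : Matrix (Fin n) (Fin n) R := Matrix.of fun i k => if k = z then w i else 0 with hc
  set rm : Matrix (Fin n) (Fin n) R := Matrix.of fun k j => if k = z then r' j else 0 with hrm
  set h : Matrix (Fin n) (Fin n) R := Matrix.of fun i j =>
    if i = z ∨ j = z then (if i = j then (1 : R) else 0) else G i j - G i z * G z j with hh
  have hcM : ∀ (M : Matrix (Fin n) (Fin n) R) i j, (c * M) i j = w i * M z j := by
    intro M i j
    simp [Matrix.mul_apply, hc, ite_mul, zero_mul]
  have hMr : ∀ (M : Matrix (Fin n) (Fin n) R) i j, (M * rm) i j = M i z * r' j := by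
    intro M i j
    simp [Matrix.mul_apply, hrm, mul_ite, mul_zero]
  have hIdiag : ∀ i : Fin n, (1 : Matrix (Fin n) (Fin n) R) i i = 1 := fun i => Matrix.one_apply_eq i
  have hzz : h z z = 1 := by simp [hh]
  have hzj : ∀ j, j ≠ z → h z j = 0 := by intro j hj; simp [hh, hj, (by simpa [eq_comm] using hj : ¬ z = j)]
  have hiz : ∀ i, i ≠ z → h i z = 0 := by intro i hi; simp [hh, hi]
  refine ⟨1 + c, h, 1 + rm, ?_, ?_, ?_, ?_, ?_, ?_, ?_, ?_, ?_, ?_⟩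
  · ext i j
    have : ((1 + c) * h * (1 + rm)) i j
        = h i j + w i * h z j + (h i z * r' j + w i * h z z * r' j) := by
      simp only [Matrix.add_mul, Matrix.mul_add, Matrix.one_mul, Matrix.mul_one,
        Matrix.add_apply, hcM, hMr]
    rw [this]
    by_cases hi : i = z <;> by_cases hj : j = z
    · subst hi; subst hj; simp [hzz, hw, hr', hg11]
    · subst hi
      simp [hzz, hzj j hj, hw, hr', hj]
    · subst hj
      simp [hzz, hiz i hi, hw, hr', hi]
    · simp [hzz, hzj j hj, hiz i hi, hw, hr', hi, hj, hh,
        show ¬ z = j from fun e => hj e.symm]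
  · intro i; by_cases hi : i = z <;> simp [Matrix.add_apply, hc, hw, hi]
  · intro i hi
    have : (1 + c) i z = G i z := by simp [Matrix.add_apply, hc, hw, hi, Matrix.one_apply_ne hi]
    rw [this]
    have := hg i z
    simpa [Matrix.one_apply_ne hi] using this
  · intro i j hij hjz; simp [Matrix.add_apply, hc, hjz, Matrix.one_apply_ne hij]
  · intro j; by_cases hj : j = z
    · subst hj; simp [hzz]
    · simp [hzj j hj, Matrix.one_apply_ne (by simpa [eq_comm] using hj : z ≠ j)]
  · intro i; by_cases hi : i = z
    · subst hi; simp [hzz]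
    · simp [hiz i hi, Matrix.one_apply_ne hi]
  · intro i j
    by_cases hi : i = z
    · subst hi
      by_cases hj : j = z
      · subst hj; simp [hzz]
      · simp [hzj j hj, Matrix.one_apply_ne (by simpa [eq_comm] using hj : z ≠ j)]
    · by_cases hj : j = z
      · subst hj; simp [hiz i hi, Matrix.one_apply_ne hi]
      · have h1 : h i j = G i j - G i z * G z j := by simp [hh, hi, hj]
        rw [h1]
        have e1 : G i j - (1 : Matrix (Fin n) (Fin n) R) i j ∈ I := hg i j
        have e2 : G i z ∈ I := by simpa [Matrix.one_apply_ne hi] using hg i z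
        have : G i j - (1 : Matrix (Fin n) (Fin n) R) i j - G i z * G z j ∈ I :=
          I.sub_mem e1 (I.mul_mem_right _ e2)
        convert this using 1; ring
  · intro i; by_cases hi : i = z <;> simp [Matrix.add_apply, hrm, hr', hi]
  · intro j hj
    have : (1 + rm) z j = G z j := by
      simp [Matrix.add_apply, hrm, hr', hj, Matrix.one_apply_ne (by simpa [eq_comm] using hj : z ≠ j)]
    rw [this]
    simpa [Matrix.one_apply_ne (by simpa [eq_comm] using hj : z ≠ j)] using hg z j
  · intro i j hij hiz'; simp [Matrix.add_apply, hrm, hiz', Matrix.one_apply_ne hij]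
end

section
/- Let R be a commutative ring, I an ideal of R, and n ≥ 2. Then every diagonal matrix d = diag(ε₁, …, εₙ) ∈ SL(n,R) with εᵢ ≡ 1 (mod I) for all i belongs to the relative elementary subgroup E(n,R,I). (The relative torus is contained in the relative elementary subgroup, case Φ = A_{n−1}; consequence of the identity h_α(1+s) = x_α((1+s)⁻¹ − 1) · z_{−α}(−s, (1+s)⁻¹) · x_{−α}(s(1+s)).) -/
/-!
Write `d = diagonal u` with `u : Fin n → Rˣ`, `∏ u = 1`, `u k ≡ 1 (mod I)`. In the commutative
group `Fin n → Rˣ`, for any pivot `p`, `u = ∏ₖ (u k at k) · ((u k)⁻¹ at p)`, so it suffices that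
every two-entry torus element `h_{ij}(v) = diag(…, v, …, v⁻¹, …)` with `v ≡ 1` lies in `E(n,R,I)`.
This follows from
`h_{ij}(v) = t_{ij}(v⁻¹ - 1) · e t_{ji}(1 - v) e⁻¹ · t_{ji}((v - 1) v)` with `e = t_{ij}(-v⁻¹)`,
all of whose transvection parameters lie in `I`.
-/

open Matrix

lemma Finset.univ_prod_mulSingle_mul_mulSingle_inv {ι G : Type*} [Fintype ι] [DecidableEq ι]
    [CommGroup G] (u : ι → G) (hu : ∏ k, u k = 1) (p : ι) :
    ∏ k, Pi.mulSingle k (u k) * Pi.mulSingle p (u k)⁻¹ = u := by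
  have hp := map_prod (MonoidHom.mulSingle (fun _ => G) p) (fun k => (u k)⁻¹) Finset.univ
  simp only [MonoidHom.mulSingle_apply] at hp
  rw [Finset.prod_mul_distrib, Finset.univ_prod_mulSingle, ← hp, Finset.prod_inv_distrib, hu,
    inv_one, Pi.mulSingle_one, mul_one]

section

variable {R : Type*} [CommRing R] {n : ℕ}

lemma mul_transvection_apply {ι m : Type*} [Fintype ι] [DecidableEq ι] (M : Matrix m ι R)
    (i j : ι) (c : R) (k : m) (l : ι) :
    (M * transvection i j c) k l = M k l + if l = j then c * M k i else 0 := by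
  by_cases h : l = j
  · subst h; simp
  · simp [h]

lemma transvection_mul_transvection_mul_transvection_mul_transvection {ι : Type*} [Fintype ι]
    [DecidableEq ι] {i j : ι} (hij : i ≠ j) {a b : R} (hab : a * b = 1) :
    transvection i j (-1) * transvection j i (1 - a) * transvection i j b *
        transvection j i ((a - 1) * a) =
      diagonal (Pi.mulSingle i a * Pi.mulSingle j b) := by
  ext k l
  simp only [mul_transvection_apply]
  simp only [transvection, Matrix.add_apply, one_apply, single_apply, diagonal_apply,
    Pi.mul_apply, Pi.mulSingle_apply]
  by_cases hki : k = i <;> by_cases hkj : k = j <;> by_cases hli : l = i <;> by_cases hlj : l = j <;>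
    subst_vars <;> simp_all <;> grind

lemma coe_mulSingle_mul_mulSingle_inv {ι : Type*} [DecidableEq ι] (i j : ι) (u : Rˣ) :
    (fun k => ((Pi.mulSingle i u * Pi.mulSingle j u⁻¹ : ι → Rˣ) k : R)) =
      Pi.mulSingle i (u : R) * Pi.mulSingle j ((u⁻¹ : Rˣ) : R) := by
  ext k
  by_cases hki : k = i <;> by_cases hkj : k = j <;> subst_vars <;> simp_all

lemma Matrix.IsDiag.exists_units_of_det_eq_one {ι : Type*} [Fintype ι] [DecidableEq ι]
    {A : Matrix ι ι R} (hA : A.IsDiag) (hdet : A.det = 1) :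
    ∃ u : ι → Rˣ, ∏ k, u k = 1 ∧ A = diagonal fun k => (u k : R) := by
  rw [← hA.diagonal_diag, det_diagonal] at hdet
  have hunit (k : ι) : IsUnit (A.diag k) :=
    isUnit_of_dvd_one ((Finset.dvd_prod_of_mem _ (Finset.mem_univ k)).trans hdet.dvd)
  refine ⟨fun k => (hunit k).unit, Units.ext (by simpa using hdet), ?_⟩
  exact hA.diagonal_diag.symm.trans (congrArg diagonal (funext fun k => (hunit k).unit_spec.symm))

lemma tSL_mem_elemGroup {i j : Fin n} (hij : i ≠ j) (ξ : R) : tSL i j hij ξ ∈ elemGroup n R :=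
  Subgroup.subset_closure ⟨i, j, hij, ξ, rfl⟩

lemma conj_tSL_mem_relElemGroup {I : Ideal R} {e : Matrix.SpecialLinearGroup (Fin n) R}
    (he : e ∈ elemGroup n R) {i j : Fin n} (hij : i ≠ j) {s : R} (hs : s ∈ I) :
    e * tSL i j hij s * e⁻¹ ∈ relElemGroup n I :=
  Subgroup.subset_closure ⟨e, he, i, j, hij, s, hs, rfl⟩

lemma tSL_mem_relElemGroup {I : Ideal R} {i j : Fin n} (hij : i ≠ j) {s : R} (hs : s ∈ I) :
    tSL i j hij s ∈ relElemGroup n I := by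
  simpa using conj_tSL_mem_relElemGroup (one_mem _) hij hs

lemma coe_tSL {i j : Fin n} (hij : i ≠ j) (ξ : R) :
    (tSL i j hij ξ : Matrix (Fin n) (Fin n) R) = transvection i j ξ :=
  rfl

lemma tSL_mul {i j : Fin n} (hij : i ≠ j) (a b : R) :
    tSL i j hij a * tSL i j hij b = tSL i j hij (a + b) :=
  Subtype.ext (transvection_mul_transvection_same i j hij a b)

lemma tSL_inv {i j : Fin n} (hij : i ≠ j) (a : R) : (tSL i j hij a)⁻¹ = tSL i j hij (-a) := by
  rw [inv_eq_iff_mul_eq_one, tSL_mul, add_neg_cancel]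
  exact Subtype.ext (transvection_zero i j)

-- A submonoid of the commutative monoid `Fin n → Rˣ`, so that `Submonoid.prod_mem` applies.
def relElemTorus (I : Ideal R) : Submonoid (Fin n → Rˣ) where
  carrier :=
    {u | ∃ g ∈ relElemGroup n I, (g : Matrix (Fin n) (Fin n) R) = diagonal fun k => (u k : R)}
  one_mem' := ⟨1, one_mem _, by simp⟩
  mul_mem' := by
    rintro u v ⟨g, hg, hgu⟩ ⟨h, hh, hhv⟩
    exact ⟨g * h, mul_mem hg hh, by simp [hgu, hhv, diagonal_mul_diagonal]⟩

lemma mem_relElemTorus {I : Ideal R} {u : Fin n → Rˣ} :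
    u ∈ relElemTorus I ↔
      ∃ g ∈ relElemGroup n I, (g : Matrix (Fin n) (Fin n) R) = diagonal fun k => (u k : R) :=
  Iff.rfl

lemma mulSingle_mul_mulSingle_inv_mem_relElemTorus {I : Ideal R} {i j : Fin n} (hij : i ≠ j)
    {u : Rˣ} (hu : (u : R) - 1 ∈ I) :
    Pi.mulSingle i u * Pi.mulSingle j u⁻¹ ∈ relElemTorus I := by
  set v : R := ((u⁻¹ : Rˣ) : R)
  have huv : (u : R) * v = 1 := u.mul_inv
  have hv : v - 1 ∈ I := by
    rw [show v - 1 = -v * (u - 1) by linear_combination huv]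
    exact I.mul_mem_left _ hu
  refine mem_relElemTorus.2 ⟨tSL i j hij (v - 1) *
      (tSL i j hij (-v) * tSL j i hij.symm (1 - (u : R)) * (tSL i j hij (-v))⁻¹) *
      tSL j i hij.symm (((u : R) - 1) * u), ?_, ?_⟩
  · refine mul_mem (mul_mem (tSL_mem_relElemGroup hij hv)
      (conj_tSL_mem_relElemGroup (tSL_mem_elemGroup hij _) hij.symm ?_))
      (tSL_mem_relElemGroup hij.symm (I.mul_mem_right _ hu))
    simpa using I.neg_mem hu
  · rw [tSL_inv, neg_neg, ← mul_assoc, ← mul_assoc, tSL_mul,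
      show v - 1 + -v = -1 by ring, coe_mulSingle_mul_mulSingle_inv]
    simp only [Matrix.SpecialLinearGroup.coe_mul, coe_tSL]
    exact transvection_mul_transvection_mul_transvection_mul_transvection hij huv

lemma mem_relElemTorus_of_prod_eq_one {I : Ideal R} {u : Fin n → Rˣ} (hu : ∏ k, u k = 1)
    (hI : ∀ k, (u k : R) - 1 ∈ I) (p : Fin n) : u ∈ relElemTorus I := by
  rw [← Finset.univ_prod_mulSingle_mul_mulSingle_inv u hu p]
  refine Submonoid.prod_mem _ fun k _ => ?_
  obtain rfl | hkp := eq_or_ne k p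
  · rw [← Pi.mulSingle_mul, mul_inv_cancel, Pi.mulSingle_one]
    exact one_mem _
  · exact mulSingle_mul_mulSingle_inv_mem_relElemTorus hkp (hI k)


end

/-- A diagonal matrix in `SL(n,R)` with all diagonal entries `≡ 1 (mod I)` belongs to the
relative elementary subgroup `E(n,R,I)`. -/
theorem diagonal_mem_relElem {R : Type*} [CommRing R] (I : Ideal R) (n : ℕ) (hn : 2 ≤ n)
    (d : Matrix.SpecialLinearGroup (Fin n) R)
    (hdiag : ∀ i j : Fin n, i ≠ j → (d : Matrix (Fin n) (Fin n) R) i j = 0)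
    (hI : ∀ i : Fin n, (d : Matrix (Fin n) (Fin n) R) i i - 1 ∈ I) :
    d ∈ relElemGroup n I := by
  obtain ⟨u, hu, hdu⟩ := Matrix.IsDiag.exists_units_of_det_eq_one hdiag d.det_coe
  have hIu (k : Fin n) : (u k : R) - 1 ∈ I := by
    simpa [hdu] using hI k
  obtain ⟨g, hg, hgu⟩ := mem_relElemTorus_of_prod_eq_one hu hIu ⟨0, by omega⟩
  rwa [show d = g from Subtype.ext (hdu.trans hgu.symm)]
end
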